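/- arXiv:1004.0415 — 5 statements merged into one kernel-verified Lean document; each statement's English description precedes it below -/
import Mathlib

section
/- Let μ be a directed metric on a nonempty finite set S and let (V,d) be an extension of (S,μ). Then d is cyclically tight if and only if there exists a map ρ : V → Q_μ^+ with D_∞(ρ(x), ρ(y)) = d(x,y) for all x,y ∈ V, ρ(s) = μ_s for all s ∈ S, and ρ(V) balanced. Moreover, if d is cyclically tight, then any such ρ satisfies ρ(x) = d_x for all x ∈ V. -/
open scoped BigOperators

/-- Points of `ℝ^{S^{cr}}`: pairs `p = (p^c, p^r)` of functions `S → ℝ`,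
with the componentwise partial order (the product/pi order). -/
abbrev Pt (S : Type*) := (S → ℝ) × (S → ℝ)

/-- `μ` is a directed distance: nonnegative with zero diagonal. -/
def DirDist {S : Type*} (μ : S → S → ℝ) : Prop :=
  (∀ s t, 0 ≤ μ s t) ∧ (∀ s, μ s s = 0)

/-- `d` is a directed metric: a directed distance satisfying the triangle inequality. -/
def DirMetric {V : Type*} (d : V → V → ℝ) : Prop :=
  DirDist d ∧ ∀ x y z, d x z ≤ d x y + d y z

/-- The polyhedron `Π_μ`. -/
def PiP {S : Type*} (μ : S → S → ℝ) : Set (Pt S) :=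
  {p | ∀ s t, μ s t ≤ p.1 s + p.2 t}

/-- The polyhedron `P_μ = Π_μ ∩ ℝ_+^{S^{cr}}`. -/
def PP {S : Type*} (μ : S → S → ℝ) : Set (Pt S) :=
  {p ∈ PiP μ | 0 ≤ p}

/-- The directed tight span `T_μ`: minimal elements of `P_μ`. -/
def TT {S : Type*} (μ : S → S → ℝ) : Set (Pt S) :=
  {p ∈ PP μ | ∀ q ∈ PP μ, q ≤ p → q = p}

/-- `Q_μ`: minimal elements of `Π_μ`. -/
def QQ {S : Type*} (μ : S → S → ℝ) : Set (Pt S) :=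
  {p ∈ PiP μ | ∀ q ∈ PiP μ, q ≤ p → q = p}

/-- `Q_μ^+ = Q_μ ∩ ℝ_+^{S^{cr}}`. -/
def QP {S : Type*} (μ : S → S → ℝ) : Set (Pt S) :=
  QQ μ ∩ {p | 0 ≤ p}

/-- `D_∞^+(f,g) = max_x (g(x) - f(x))_+`. -/
noncomputable def Dplus {X : Type*} [Fintype X] (f g : X → ℝ) : ℝ :=
  ⨆ x, max (g x - f x) 0

/-- `D_∞(p,q) = max ( D_∞^+(p^c,q^c), D_∞^+(q^r,p^r) )`. -/
noncomputable def Dinf {S : Type*} [Fintype S] (p q : Pt S) : ℝ :=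
  max (Dplus p.1 q.1) (Dplus q.2 p.2)

/-- A subset `R` is balanced if no pair `p, q ∈ R` satisfies `p^c < q^c`,
and no pair satisfies `p^r < q^r`. -/
def BalancedSet {S : Type*} (R : Set (Pt S)) : Prop :=
  (¬ ∃ p ∈ R, ∃ q ∈ R, ∀ s, p.1 s < q.1 s) ∧
  (¬ ∃ p ∈ R, ∃ q ∈ R, ∀ s, p.2 s < q.2 s)

/-- The vector `e = (1, -1)` spanning the linearity space of `Π_μ`. -/
def eVec (S : Type*) : Pt S := (fun _ => 1, fun _ => -1)

/-- `R ⊆ Q_μ` is a section: every point of `Q_μ` differs from exactly one point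
of `R` by a multiple of `e`. -/
def IsSection {S : Type*} (μ : S → S → ℝ) (R : Set (Pt S)) : Prop :=
  R ⊆ QQ μ ∧ ∀ q ∈ QQ μ, ∃! p, p ∈ R ∧ ∃ α : ℝ, q - p = α • eVec S

/-- The length of the cycle `(x 0, x 1, …, x m)` with respect to `d`. -/
def cycLen {V : Type*} (d : V → V → ℝ) (m : ℕ) (x : Fin (m + 1) → V) : ℝ :=
  ∑ i, d (x i) (x (i + 1))


/-- The canonical point `μ_s` of `ℝ^{S^{cr}}`. -/
def muVec {S : Type*} (μ : S → S → ℝ) (s : S) : Pt S :=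
  (fun t => μ t s, fun t => μ s t)

/-- The point `d_x ∈ ℝ^{S^{cr}}` associated with `x ∈ V`. -/
def dVec {V : Type*} (S : Set V) (d : V → V → ℝ) (x : V) : Pt S :=
  (fun s => d s x, fun s => d x s)

/-- `(V,d)` is a cyclically tight extension of `(S,μ)`:  `d` is a directed
metric on `V` restricting to `μ` on `S`, and there is no extension `d'` of `μ`
whose cycle lengths are all at most those of `d`, with strict inequality on
some cycle. -/
def IsCycTightExt {V : Type*} (S : Set V) (μ : S → S → ℝ) (d : V → V → ℝ) : Prop :=
  DirMetric d ∧ (∀ s t : S, d s t = μ s t) ∧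
  ¬ ∃ d' : V → V → ℝ, DirMetric d' ∧ (∀ s t : S, d' s t = μ s t) ∧
      (∀ (m : ℕ) (x : Fin (m + 1) → V), cycLen d' m x ≤ cycLen d m x) ∧
      (∃ (m : ℕ) (x : Fin (m + 1) → V), cycLen d' m x < cycLen d m x)


/-!
Call `d` cyclically reducible when some extension has no longer and some strictly shorter
cycle. Each defect of `x ↦ d_x` gives such an extension by adding one edge `a → b` of length
`c`, i.e. by passing to `min (d x y) (d x a + c + d b y)`: a slack column of `d_x` (edge
`s → x`), a pair with `D_∞(d_x, d_y) < d(x, y)` (edge `x → y` of length `D_∞`), or an unbalanced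
pair. When `c` has to be negative, one first reweights `d` by a potential, which changes no
cycle length.

Conversely, under the three conditions every pair `x, y` lies on a geodesic starting or ending
in `S`. If `d'` is an extension with no longer cycles, `d - d'` has nonnegative cycles, hence a
potential; reweighted by it, `d'` lies below `d`, agrees with `μ` on `S` and satisfies the
triangle inequality. Minimality of the `d_x` in `Π_μ` forces equality on `S × V` and `V × S`,
and the geodesics propagate it to `V × V`, so `d'` has the same cycle lengths as `d`.
Finally `D_∞(μ_s, p) = p^c(s)` and `D_∞(p, μ_s) = p^r(s)` on `Q_μ^+`, which pins `ρ` down to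
`x ↦ d_x`. Statements about rows follow from those about columns by reversing all distances.
-/

lemma exists_pos_add_le_of_forall_lt {ι : Type*} [Finite ι] {f g : ι → ℝ}
    (h : ∀ i, f i < g i) : ∃ ε > 0, ∀ i, f i + ε ≤ g i := by
  rcases isEmpty_or_nonempty ι with hι | hι
  · exact ⟨1, one_pos, fun i => isEmptyElim i⟩
  obtain ⟨i₀, hi₀⟩ := Finite.exists_min fun i => g i - f i
  exact ⟨g i₀ - f i₀, sub_pos.2 (h i₀), fun i => by linarith [hi₀ i]⟩

section Dplus

variable {X : Type*} [Fintype X] {f g : X → ℝ} {c : ℝ}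

lemma dplus_nonneg (f g : X → ℝ) : 0 ≤ Dplus f g :=
  Real.iSup_nonneg fun _ => le_max_right _ _

lemma dplus_le (hc : 0 ≤ c) (h : ∀ x, g x - f x ≤ c) : Dplus f g ≤ c :=
  Real.iSup_le (fun x => max_le (h x) hc) hc

lemma sub_le_dplus (f g : X → ℝ) (x : X) : g x - f x ≤ Dplus f g :=
  (le_max_left _ _).trans <| le_ciSup (Finite.bddAbove_range fun x => max (g x - f x) 0) x

lemma dplus_eq (hc : 0 ≤ c) (h : ∀ x, g x - f x ≤ c) {x₀ : X} (hx₀ : g x₀ - f x₀ = c) :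
    Dplus f g = c :=
  (dplus_le hc h).antisymm (hx₀ ▸ sub_le_dplus f g x₀)

lemma exists_sub_eq_of_dplus_eq (h : Dplus f g = c) (hc : 0 < c) : ∃ x, g x - f x = c := by
  rcases isEmpty_or_nonempty X with hX | hX
  · simp [Dplus, Real.iSup_of_isEmpty] at h
    linarith
  obtain ⟨x, hx⟩ := Finite.exists_max fun x => max (g x - f x) 0
  have hmax : Dplus f g = max (g x - f x) 0 := (Real.iSup_le hx (le_max_right _ _)).antisymm
    (le_ciSup (Finite.bddAbove_range fun x => max (g x - f x) 0) x)
  refine ⟨x, ?_⟩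
  rcases max_cases (g x - f x) 0 with ⟨hm, -⟩ | ⟨hm, -⟩ <;> rw [hm] at hmax <;> linarith

end Dplus

lemma dinf_nonneg {S : Type*} [Fintype S] (p q : Pt S) : 0 ≤ Dinf p q :=
  (dplus_nonneg _ _).trans (le_max_left _ _)

lemma dinf_swap {S : Type*} [Fintype S] (p q : Pt S) : Dinf p.swap q.swap = Dinf q p :=
  max_comm _ _

section DirMetric

variable {V : Type*} {d : V → V → ℝ}

lemma DirMetric.nonneg (hd : DirMetric d) (x y : V) : 0 ≤ d x y := hd.1.1 x y

lemma DirMetric.self_eq_zero (hd : DirMetric d) (x : V) : d x x = 0 := hd.1.2 x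

lemma DirMetric.triangle (hd : DirMetric d) (x y z : V) : d x z ≤ d x y + d y z := hd.2 x y z

lemma DirMetric.flip (hd : DirMetric d) : DirMetric (flip d) :=
  ⟨⟨fun x y => hd.nonneg y x, hd.self_eq_zero⟩,
    fun x y z => (hd.triangle z y x).trans_eq (add_comm _ _)⟩

end DirMetric

section Cycles

variable {V : Type*}

lemma cycLen_mono {d₁ d₂ : V → V → ℝ} (h : ∀ u v, d₁ u v ≤ d₂ u v) (m : ℕ)
    (x : Fin (m + 1) → V) : cycLen d₁ m x ≤ cycLen d₂ m x :=
  Finset.sum_le_sum fun _ _ => h _ _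

lemma cycLen_sub (d₁ d₂ : V → V → ℝ) (m : ℕ) (x : Fin (m + 1) → V) :
    cycLen (fun u v => d₁ u v - d₂ u v) m x = cycLen d₁ m x - cycLen d₂ m x :=
  Finset.sum_sub_distrib _ _

lemma cycLen_two (d : V → V → ℝ) (a b : V) : cycLen d 1 ![a, b] = d a b + d b a := by
  simp [cycLen, Fin.sum_univ_two, show (1 : Fin 2) + 1 = 0 from rfl]

lemma cycLen_flip (d : V → V → ℝ) (m : ℕ) (x : Fin (m + 1) → V) :
    cycLen (flip d) m x = cycLen d m fun i => x (-i) :=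
  (Fintype.sum_equiv ((Equiv.addRight 1).trans (Equiv.neg _)) _ _ fun i => by
    simp [flip]).symm

def reweight (d : V → V → ℝ) (h : V → ℝ) : V → V → ℝ := fun a b => d a b + h a - h b

lemma cycLen_reweight (d : V → V → ℝ) (h : V → ℝ) (m : ℕ) (x : Fin (m + 1) → V) :
    cycLen (reweight d h) m x = cycLen d m x := by
  have hshift : ∑ i, h (x (i + 1)) = ∑ i, h (x i) :=
    Fintype.sum_equiv (Equiv.addRight 1) _ _ fun _ => rfl
  simp only [cycLen, reweight, Finset.sum_sub_distrib, Finset.sum_add_distrib, hshift]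
  ring

lemma DirMetric.reweight {d : V → V → ℝ} (hd : DirMetric d) {h : V → ℝ}
    (hh : ∀ a b, h b ≤ h a + d a b) : DirMetric (reweight d h) := by
  refine ⟨⟨fun a b => ?_, fun a => ?_⟩, fun a b c => ?_⟩ <;> simp only [_root_.reweight]
  · linarith [hh a b]
  · simp [hd.self_eq_zero]
  · linarith [hd.triangle a b c]

end Cycles

/-- `IsCycTightExt S μ d` unfolds to
`DirMetric d ∧ (∀ s t : S, d s t = μ s t) ∧ ¬ CycReducible S μ d`. -/
def CycReducible {V : Type*} (S : Set V) (μ : S → S → ℝ) (d : V → V → ℝ) : Prop :=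
  ∃ d' : V → V → ℝ, DirMetric d' ∧ (∀ s t : S, d' s t = μ s t) ∧
    (∀ (m : ℕ) (x : Fin (m + 1) → V), cycLen d' m x ≤ cycLen d m x) ∧
    (∃ (m : ℕ) (x : Fin (m + 1) → V), cycLen d' m x < cycLen d m x)

section Reducible

variable {V : Type*} {S : Set V} {μ : S → S → ℝ} {d : V → V → ℝ}

lemma CycReducible.of_reweight {h : V → ℝ} (hr : CycReducible S μ (reweight d h)) :
    CycReducible S μ d := by
  simp only [CycReducible, cycLen_reweight] at hr
  exact hr

lemma CycReducible.of_flip (hr : CycReducible S (flip μ) (flip d)) : CycReducible S μ d := by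
  obtain ⟨d', hd', hext', hle, m, x, hlt⟩ := hr
  refine ⟨flip d', hd'.flip, fun s t => hext' t s, fun m x => ?_, m, fun i => x (-i), ?_⟩
  · simpa [cycLen_flip] using hle m fun i => x (-i)
  · simpa [cycLen_flip] using hlt

/-- Add an edge `a → b` of length `c`. -/
lemma cycReducible_of_shortcut (hd : DirMetric d) (hext : ∀ s t : S, d s t = μ s t)
    {a b : V} {c : ℝ} (hc : 0 ≤ c) (hlt : c < d a b)
    (hμ : ∀ s t : S, μ s t ≤ d s a + c + d b t) : CycReducible S μ d := by
  set d' : V → V → ℝ := fun x y => min (d x y) (d x a + c + d b y)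
  have hdetour : ∀ x y, 0 ≤ d x a + c + d b y := fun x y => by
    linarith [hd.nonneg x a, hd.nonneg b y]
  have hd' : DirMetric d' := by
    refine ⟨⟨fun x y => le_min (hd.nonneg x y) (hdetour x y), fun x => ?_⟩, fun x y z => ?_⟩
    · simpa only [d', hd.self_eq_zero] using min_eq_left (hdetour x x)
    · rcases min_cases (d x y) (d x a + c + d b y) with ⟨h₁, -⟩ | ⟨h₁, -⟩ <;>
        rcases min_cases (d y z) (d y a + c + d b z) with ⟨h₂, -⟩ | ⟨h₂, -⟩ <;>
        simp only [d', h₁, h₂]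
      · exact min_le_of_left_le (hd.triangle x y z)
      · exact min_le_of_right_le (by linarith [hd.triangle x y a])
      · exact min_le_of_right_le (by linarith [hd.triangle b y z])
      · exact min_le_of_right_le (by linarith [hd.nonneg b y, hd.nonneg y a])
  have hle : ∀ x y, d' x y ≤ d x y := fun x y => min_le_left _ _
  refine ⟨d', hd', fun s t => ?_, cycLen_mono hle, 1, ![a, b], ?_⟩
  · simp only [d', hext]
    exact min_eq_left (hμ s t)
  have hab : d' a b ≤ c := (min_le_right _ _).trans_eq (by simp [hd.self_eq_zero])
  rw [cycLen_two, cycLen_two]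
  linarith [hle b a]

/-- Add an edge `a → b` of length `-ε`: reweighting by `min (d b ·) ε` first moves `b` closer to
`a`, after which the edge has length `0`. -/
lemma cycReducible_of_neg_shortcut (hd : DirMetric d) (hext : ∀ s t : S, d s t = μ s t)
    {a b : V} {ε : ℝ} (hε : 0 < ε) (hba : ε ≤ d b a) (hb : ∀ s : S, ε ≤ d b s)
    (hμ : ∀ s t : S, μ s t + ε ≤ d s a + d b t) : CycReducible S μ d := by
  set h : V → ℝ := fun w => min (d b w) ε
  have ha : h a = ε := min_eq_right hba
  have hb' : h b = 0 := by simp [h, hd.self_eq_zero, hε.le]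
  have hS : ∀ s : S, h s = ε := fun s => min_eq_right (hb s)
  have hh : ∀ x y, h y ≤ h x + d x y := fun x y =>
    calc h y ≤ min (d b x + d x y) (ε + d x y) :=
          min_le_min (hd.triangle b x y) (by linarith [hd.nonneg x y])
      _ = h x + d x y := min_add_add_right _ _ _
  refine (cycReducible_of_shortcut (a := a) (b := b) (hd.reweight hh) (fun s t => ?_) le_rfl ?_
    fun s t => ?_).of_reweight
  · simp [reweight, hS, hext]
  · simp only [reweight, ha, hb']; linarith [hd.nonneg a b]
  · simp only [reweight, ha, hb', hS]; linarith [hμ s t]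

end Reducible

section Polyhedron

variable {S : Type*} {μ : S → S → ℝ} {p : Pt S}

lemma swap_mem_PiP_flip : p.swap ∈ PiP (flip μ) ↔ p ∈ PiP μ :=
  ⟨fun h s t => (h t s).trans_eq (add_comm _ _), fun h s t => (h t s).trans_eq (add_comm _ _)⟩

lemma swap_mem_QQ_flip (hp : p ∈ QQ μ) : p.swap ∈ QQ (flip μ) :=
  ⟨swap_mem_PiP_flip.2 hp.1, fun q hq hle => by
    rw [← hp.2 q.swap (swap_mem_PiP_flip.1 (by exact hq)) (Prod.swap_le_swap.2 hle),
      Prod.swap_swap]⟩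

lemma swap_mem_QP_flip (hp : p ∈ QP μ) : p.swap ∈ QP (flip μ) :=
  ⟨swap_mem_QQ_flip hp.1, Prod.swap_le_swap.2 hp.2⟩

lemma exists_col_eq_of_mem_QQ [Finite S] (hp : p ∈ QQ μ) (s : S) : ∃ t, p.1 s + p.2 t = μ s t := by
  by_contra! hne
  obtain ⟨η, hη, hslack⟩ := exists_pos_add_le_of_forall_lt fun t => (hp.1 s t).lt_of_ne (hne t).symm
  classical
  set q : Pt S := (Function.update p.1 s (p.1 s - η), p.2)
  have hq : q ∈ PiP μ := fun s' t => by
    rcases eq_or_ne s' s with rfl | hs'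
    · simp only [q, Function.update_self]; linarith [hslack t]
    · simpa [q, Function.update_of_ne hs'] using hp.1 s' t
  have hle : q ≤ p := ⟨fun s' => by
    rcases eq_or_ne s' s with rfl | hs'
    · simp only [q, Function.update_self]; linarith
    · simp [q, Function.update_of_ne hs'], le_rfl⟩
  have := congrArg (fun r : Pt S => r.1 s) (hp.2 q hq hle)
  simp only [q, Function.update_self] at this
  linarith

lemma exists_row_eq_of_mem_QQ [Finite S] (hp : p ∈ QQ μ) (t : S) : ∃ s, p.1 s + p.2 t = μ s t :=
  (exists_col_eq_of_mem_QQ (swap_mem_QQ_flip hp) t).imp fun _ hs => (add_comm _ _).trans hs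

lemma mem_QQ_of_exists_eq (hp : p ∈ PiP μ) (hc : ∀ s, ∃ t, p.1 s + p.2 t = μ s t)
    (hr : ∀ t, ∃ s, p.1 s + p.2 t = μ s t) : p ∈ QQ μ := by
  refine ⟨hp, fun q hq hle => Prod.ext (funext fun s => ?_) (funext fun t => ?_)⟩
  · obtain ⟨t, ht⟩ := hc s
    linarith [hle.1 s, hle.2 t, hq s t]
  · obtain ⟨s, hs⟩ := hr t
    linarith [hle.1 s, hle.2 t, hq s t]

lemma col_le_of_mem_QQ [Finite S] (hμ : DirMetric μ) (hp : p ∈ QQ μ) (s t : S) :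
    p.1 t ≤ μ t s + p.1 s := by
  obtain ⟨u, hu⟩ := exists_col_eq_of_mem_QQ hp t
  linarith [hμ.triangle t s u, hp.1 s u]

lemma dinf_muVec_left [Fintype S] (hμ : DirMetric μ) (hp : p ∈ QP μ) (s : S) :
    Dinf (muVec μ s) p = p.1 s := by
  obtain ⟨t, ht⟩ := exists_col_eq_of_mem_QQ hp.1 s
  have hc : Dplus (muVec μ s).1 p.1 = p.1 s :=
    dplus_eq (hp.2.1 s) (fun t => by simp only [muVec]; linarith [col_le_of_mem_QQ hμ hp.1 s t])
      (x₀ := s) (by simp [muVec, hμ.self_eq_zero])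
  have hr : Dplus p.2 (muVec μ s).2 = p.1 s :=
    dplus_eq (hp.2.1 s) (fun t => by simp only [muVec]; linarith [hp.1.1 s t]) (x₀ := t)
      (by simp only [muVec]; linarith)
  rw [Dinf, hc, hr, max_self]

lemma dinf_muVec_right [Fintype S] (hμ : DirMetric μ) (hp : p ∈ QP μ) (s : S) :
    Dinf p (muVec μ s) = p.2 s := by
  rw [← dinf_swap]
  exact dinf_muVec_left hμ.flip (swap_mem_QP_flip hp) s

end Polyhedron

section Forward

variable {V : Type*} {S : Set V} {μ : S → S → ℝ} {d : V → V → ℝ}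

lemma le_dist_add_dist (hd : DirMetric d) (hext : ∀ s t : S, d s t = μ s t) (s t : S) (x : V) :
    μ s t ≤ d s x + d x t :=
  hext s t ▸ hd.triangle s x t

lemma dVec_mem_PiP (hd : DirMetric d) (hext : ∀ s t : S, d s t = μ s t) (x : V) :
    dVec S d x ∈ PiP μ :=
  fun s t => le_dist_add_dist hd hext s t x

lemma dVec_nonneg (hd : DirMetric d) (x : V) : 0 ≤ dVec S d x :=
  ⟨fun _ => hd.nonneg _ _, fun _ => hd.nonneg _ _⟩

lemma dVec_coe (hext : ∀ s t : S, d s t = μ s t) (s : S) : dVec S d s = muVec μ s :=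
  Prod.ext (funext fun t => hext t s) (funext fun t => hext s t)

lemma dinf_dVec_le [Fintype S] (hd : DirMetric d) (x y : V) :
    Dinf (dVec S d x) (dVec S d y) ≤ d x y :=
  max_le (dplus_le (hd.nonneg x y) fun s => by simp only [dVec]; linarith [hd.triangle s x y])
    (dplus_le (hd.nonneg x y) fun s => by simp only [dVec]; linarith [hd.triangle x y s])

lemma cycReducible_of_col_slack (hd : DirMetric d) (hext : ∀ s t : S, d s t = μ s t)
    {x : V} {s₀ : S} {ε : ℝ} (hε : 0 < ε) (hslack : ∀ t : S, μ s₀ t + ε ≤ d s₀ x + d x t) :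
    CycReducible S μ d := by
  have hμ : ∀ s t : S, μ s t ≤ d s s₀ + μ s₀ t := fun s t => by
    simpa only [hext] using hd.triangle s s₀ t
  rcases (hd.nonneg s₀ x).eq_or_lt with h0 | hpos
  · refine cycReducible_of_neg_shortcut hd hext (a := s₀) (b := x) hε ?_ (fun s => ?_)
      (fun s t => ?_)
    · linarith [hslack s₀, hext s₀ s₀, hd.self_eq_zero (s₀ : V)]
    · linarith [hslack s, hext s₀ s, hd.nonneg s₀ s]
    · linarith [hslack t, hμ s t]
  · exact cycReducible_of_shortcut hd hext (le_max_right _ 0) (max_lt (sub_lt_self _ hε) hpos)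
      fun s t => by linarith [hslack t, hμ s t, le_max_left (d s₀ x - ε) 0]

lemma exists_col_eq_of_not_cycReducible [Finite S] (hd : DirMetric d)
    (hext : ∀ s t : S, d s t = μ s t) (h : ¬ CycReducible S μ d) (x : V) (s : S) :
    ∃ t : S, d s x + d x t = μ s t := by
  by_contra! hne
  obtain ⟨ε, hε, hslack⟩ := exists_pos_add_le_of_forall_lt fun t =>
    (le_dist_add_dist hd hext s t x).lt_of_ne (hne t).symm
  exact h (cycReducible_of_col_slack hd hext hε hslack)

lemma dVec_mem_QQ_of_not_cycReducible [Finite S] (hd : DirMetric d)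
    (hext : ∀ s t : S, d s t = μ s t) (h : ¬ CycReducible S μ d) (x : V) :
    dVec S d x ∈ QQ μ :=
  mem_QQ_of_exists_eq (dVec_mem_PiP hd hext x) (exists_col_eq_of_not_cycReducible hd hext h x)
    fun t => (exists_col_eq_of_not_cycReducible hd.flip (fun s t => hext t s)
      (mt CycReducible.of_flip h) x t).imp fun _ hs => (add_comm _ _).trans hs

lemma cycReducible_of_dinf_lt [Fintype S] (hd : DirMetric d) (hext : ∀ s t : S, d s t = μ s t)
    {x y : V} (hlt : Dinf (dVec S d x) (dVec S d y) < d x y) : CycReducible S μ d :=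
  cycReducible_of_shortcut hd hext (dinf_nonneg _ _) hlt fun s t => by
    have hcol : d s y - d s x ≤ Dinf (dVec S d x) (dVec S d y) :=
      (sub_le_dplus (dVec S d x).1 (dVec S d y).1 s).trans (le_max_left _ _)
    linarith [le_dist_add_dist hd hext s t y]

lemma dinf_dVec_eq_of_not_cycReducible [Fintype S] (hd : DirMetric d)
    (hext : ∀ s t : S, d s t = μ s t) (h : ¬ CycReducible S μ d) (x y : V) :
    Dinf (dVec S d x) (dVec S d y) = d x y :=
  (dinf_dVec_le hd x y).antisymm <| not_lt.1 fun hlt => h (cycReducible_of_dinf_lt hd hext hlt)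

/-- Row tightness of `d_v` makes the row of `u` exceed that of `v` by `ε`, so `v → u` is a
shortcut of length `-ε`. -/
lemma cycReducible_of_col_lt [Finite S] [Nonempty S] (hd : DirMetric d)
    (hext : ∀ s t : S, d s t = μ s t) (hQ : ∀ z, dVec S d z ∈ QQ μ) {u v : V}
    (huv : ∀ s : S, d s u < d s v) : CycReducible S μ d := by
  obtain ⟨ε, hε, hgap⟩ := exists_pos_add_le_of_forall_lt huv
  have hrow : ∀ t : S, d v t + ε ≤ d u t := fun t => by
    obtain ⟨s, hs⟩ := exists_row_eq_of_mem_QQ (hQ v) t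
    linarith [le_dist_add_dist hd hext s t u, hgap s, show d s v + d v t = μ s t from hs]
  obtain ⟨s₀⟩ := ‹Nonempty S›
  refine cycReducible_of_neg_shortcut hd hext (a := v) (b := u) hε ?_ (fun s => ?_)
    (fun s t => ?_)
  · linarith [hd.triangle s₀ u v, hgap s₀]
  · linarith [hrow s, hd.nonneg v s]
  · linarith [le_dist_add_dist hd hext s t v, hrow t]

lemma balancedSet_range_dVec_of_not_cycReducible [Finite S] [Nonempty S] (hd : DirMetric d)
    (hext : ∀ s t : S, d s t = μ s t) (h : ¬ CycReducible S μ d) :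
    BalancedSet (Set.range (dVec S d)) := by
  have hQ := dVec_mem_QQ_of_not_cycReducible hd hext h
  constructor
  · rintro ⟨_, ⟨u, rfl⟩, _, ⟨v, rfl⟩, huv⟩
    exact h (cycReducible_of_col_lt hd hext hQ huv)
  · rintro ⟨_, ⟨u, rfl⟩, _, ⟨v, rfl⟩, huv⟩
    exact h (CycReducible.of_flip (cycReducible_of_col_lt hd.flip (fun s t => hext t s)
      (fun z => swap_mem_QQ_flip (hQ z)) huv))

end Forward

section Potential

variable {V : Type*}

def pathLen (c : V → V → ℝ) (m : ℕ) (w : Fin (m + 1) → V) : ℝ :=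
  ∑ i : Fin m, c (w i.castSucc) (w i.succ)

lemma cycLen_eq_pathLen_add (c : V → V → ℝ) (m : ℕ) (w : Fin (m + 1) → V) :
    cycLen c m w = pathLen c m w + c (w (Fin.last m)) (w 0) := by
  simp [cycLen, pathLen, Fin.sum_univ_castSucc, Fin.coeSucc_eq_succ]

lemma pathLen_cons (c : V → V → ℝ) (m : ℕ) (u : V) (w : Fin (m + 1) → V) :
    pathLen c (m + 1) (Fin.cons u w) = c u (w 0) + pathLen c m w := by
  simp [pathLen, Fin.sum_univ_succ]

/-- The shortest-path distance to a base point is a potential for `c`. -/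
lemma exists_potential_of_cycLen_nonneg [Nonempty V] {c : V → V → ℝ}
    (hc : ∀ m x, 0 ≤ cycLen c m x) : ∃ f : V → ℝ, ∀ u v, f u ≤ c u v + f v := by
  obtain ⟨z⟩ := ‹Nonempty V›
  set W : V → Set ℝ := fun v =>
    {r | ∃ (m : ℕ) (w : Fin (m + 1) → V), w 0 = v ∧ w (Fin.last m) = z ∧ pathLen c m w = r}
  have hbdd : ∀ v, BddBelow (W v) := fun v => ⟨-c z v, by
    rintro _ ⟨m, w, rfl, hw, rfl⟩
    have := hc m w
    rw [cycLen_eq_pathLen_add, hw] at this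
    linarith⟩
  have hne : ∀ v, (W v).Nonempty := fun v => ⟨c v z, 1, ![v, z], rfl, rfl, by simp [pathLen]⟩
  refine ⟨fun v => sInf (W v), fun u v => ?_⟩
  have hcons : ∀ r ∈ W v, sInf (W u) ≤ c u v + r := by
    rintro _ ⟨m, w, rfl, hw, rfl⟩
    exact csInf_le (hbdd u) ⟨m + 1, Fin.cons u w, rfl, by simpa [← Fin.succ_last] using hw,
      pathLen_cons c m u w⟩
  linarith [le_csInf (hne v) fun r hr => sub_le_iff_le_add'.2 (hcons r hr)]

end Potential

section Backward

variable {V : Type*} {S : Set V} {μ : S → S → ℝ} {d : V → V → ℝ}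

/-- Every pair lies on a geodesic that starts or ends in `S`. -/
def HasSGeodesics (S : Set V) (d : V → V → ℝ) : Prop :=
  ∀ x y : V, (∃ s : S, d s x + d x y = d s y) ∨ ∃ t : S, d x y + d y t = d x t

lemma eq_of_triangle_of_le (hQ : ∀ z, dVec S d z ∈ QQ μ) (hgeo : HasSGeodesics S d)
    {D : V → V → ℝ} (htri : ∀ x y z, D x z ≤ D x y + D y z) (hext : ∀ s t : S, D s t = μ s t)
    (hle : ∀ x y, D x y ≤ d x y) : D = d := by
  have hS : ∀ z, dVec S D z = dVec S d z := fun z =>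
    (hQ z).2 _ (fun s t => hext s t ▸ htri s z t) ⟨fun s => hle s z, fun s => hle z s⟩
  have hcol : ∀ (s : S) z, D s z = d s z := fun s z => congrFun (congrArg Prod.fst (hS z)) s
  have hrow : ∀ (s : S) z, D z s = d z s := fun s z => congrFun (congrArg Prod.snd (hS z)) s
  funext x y
  refine (hle x y).antisymm ?_
  rcases hgeo x y with ⟨s, hs⟩ | ⟨t, ht⟩
  · linarith [htri s x y, hcol s x, hcol s y]
  · linarith [htri x y t, hrow t x, hrow t y]

/-- A shorter extension `d'`, reweighted by a potential of `d - d'`, is squeezed onto `d`. -/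
lemma not_cycReducible_of_hasSGeodesics (hQ : ∀ z, dVec S d z ∈ QQ μ)
    (hgeo : HasSGeodesics S d) (hext : ∀ s t : S, d s t = μ s t) : ¬ CycReducible S μ d := by
  rintro ⟨d', hd', hext', hle, m, x, hlt⟩
  have : Nonempty V := ⟨x 0⟩
  obtain ⟨f, hf⟩ := exists_potential_of_cycLen_nonneg (c := fun u v => d u v - d' u v)
    fun m x => by linarith [cycLen_sub d d' m x, hle m x]
  have hfS : ∀ s t : S, f s = f t := fun s t => le_antisymm
    (by linarith [hf s t, hext s t, hext' s t]) (by linarith [hf t s, hext t s, hext' t s])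
  have hD : reweight d' f = d := eq_of_triangle_of_le hQ hgeo
    (fun a b c => by simp only [reweight]; linarith [hd'.triangle a b c])
    (fun s t => by simp only [reweight, hfS s t, hext']; ring)
    (fun a b => by simp only [reweight]; linarith [hf a b])
  have := cycLen_reweight d' f m x
  rw [hD] at this
  linarith

lemma hasSGeodesics_of_dinf_eq [Fintype S] (hd : DirMetric d)
    (hiso : ∀ x y, Dinf (dVec S d x) (dVec S d y) = d x y)
    (hbal : BalancedSet (Set.range (dVec S d))) : HasSGeodesics S d := by
  intro x y
  rcases (hd.nonneg x y).eq_or_lt with h0 | hpos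
  · left
    obtain ⟨s, hs⟩ : ∃ s : S, d s x ≤ d s y := by
      by_contra! h
      exact hbal.1 ⟨_, ⟨y, rfl⟩, _, ⟨x, rfl⟩, h⟩
    exact ⟨s, by linarith [hd.triangle s x y]⟩
  · rcases max_choice (Dplus (dVec S d x).1 (dVec S d y).1) (Dplus (dVec S d y).2 (dVec S d x).2)
      with h | h <;> rw [← Dinf, hiso] at h
    · obtain ⟨s, hs⟩ := exists_sub_eq_of_dplus_eq h.symm hpos
      exact .inl ⟨s, by simp only [dVec] at hs; linarith⟩
    · obtain ⟨t, ht⟩ := exists_sub_eq_of_dplus_eq h.symm hpos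
      exact .inr ⟨t, by simp only [dVec] at ht; linarith⟩

lemma eq_dVec_of_dinf_eq [Fintype S] (hμ : DirMetric μ) {ρ : V → Pt S} (hQP : ∀ x, ρ x ∈ QP μ)
    (hiso : ∀ x y, Dinf (ρ x) (ρ y) = d x y) (hcoe : ∀ s : S, ρ s = muVec μ s) (x : V) :
    ρ x = dVec S d x :=
  Prod.ext (funext fun s => by rw [← dinf_muVec_left hμ (hQP x), ← hcoe, hiso]; rfl)
    (funext fun s => by rw [← dinf_muVec_right hμ (hQP x), ← hcoe, hiso]; rfl)

end Backward

/-- Theorem 2.12 (2).  An extension `d` of `μ` is cyclically tight iff there is an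
isometric embedding `ρ : V → Q_μ^+` with `ρ(s) = μ_s` for `s ∈ S` and `ρ(V)`
balanced; moreover if `d` is cyclically tight then any such `ρ` is `x ↦ d_x`. -/
theorem stmt12 {V : Type*} (S : Set V) [Fintype S] (hS : S.Nonempty)
    (μ : S → S → ℝ) (hμ : DirMetric μ)
    (d : V → V → ℝ) (hd : DirMetric d) (hext : ∀ s t : S, d s t = μ s t) :
    (IsCycTightExt S μ d ↔
      ∃ ρ : V → Pt S, (∀ x, ρ x ∈ QP μ) ∧
        (∀ x y, Dinf (ρ x) (ρ y) = d x y) ∧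
        (∀ s : S, ρ s = muVec μ s) ∧
        BalancedSet (Set.range ρ)) ∧
    (IsCycTightExt S μ d →
      ∀ ρ : V → Pt S, (∀ x, ρ x ∈ QP μ) →
        (∀ x y, Dinf (ρ x) (ρ y) = d x y) →
        (∀ s : S, ρ s = muVec μ s) →
        BalancedSet (Set.range ρ) →
        ∀ x, ρ x = dVec S d x) := by
  have : Nonempty S := hS.to_subtype
  refine ⟨⟨fun ⟨_, _, h⟩ => ?_, fun ⟨ρ, hQP, hiso, hcoe, hbal⟩ => ?_⟩,
    fun _ ρ hQP hiso hcoe _ => eq_dVec_of_dinf_eq hμ hQP hiso hcoe⟩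
  · exact ⟨dVec S d, fun x => ⟨dVec_mem_QQ_of_not_cycReducible hd hext h x, dVec_nonneg hd x⟩,
      dinf_dVec_eq_of_not_cycReducible hd hext h, dVec_coe hext,
      balancedSet_range_dVec_of_not_cycReducible hd hext h⟩
  · obtain rfl : ρ = dVec S d := funext (eq_dVec_of_dinf_eq hμ hQP hiso hcoe)
    exact ⟨hd, hext, not_cycReducible_of_hasSGeodesics (fun x => (hQP x).1)
      (hasSGeodesics_of_dinf_eq hd hiso hbal) hext⟩
end

section
/- Let V be a nonempty set and let d, d' be directed metrics on V. Then d and d' are congruent (d(C) = d'(C) for every cycle C in V) if and only if there exists a function α : V → ℝ such that d(x,y) = d'(x,y) − α(x) + α(y) for all x,y ∈ V. -/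
open scoped BigOperators

/-- Two directed metrics on `V` are congruent iff they differ by a potential:
`d(x,y) = d'(x,y) - α(x) + α(y)`. -/
theorem stmt13 {V : Type*} [Nonempty V] (d d' : V → V → ℝ)
    (hd : DirMetric d) (hd' : DirMetric d') :
    (∀ (m : ℕ) (x : Fin (m + 1) → V), cycLen d m x = cycLen d' m x) ↔
    (∃ α : V → ℝ, ∀ x y, d x y = d' x y - α x + α y) := by
  constructor
  · intro h
    obtain ⟨x₀⟩ := ‹Nonempty V›
    have f2 : ∀ x y, d x y + d y x = d' x y + d' y x := by
      intro x y
      have := h 1 ![x, y]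
      simpa [cycLen, Fin.sum_univ_succ] using this
    have f3 : ∀ x y z, d x y + d y z + d z x = d' x y + d' y z + d' z x := by
      intro x y z
      have := h 2 ![x, y, z]
      simp [cycLen, Fin.sum_univ_succ] at this
      linarith
    refine ⟨fun y => d x₀ y - d' x₀ y, fun x y => ?_⟩
    have h1 := f3 x₀ x y
    have h2 := f2 x₀ y
    show d x y = d' x y - (d x₀ x - d' x₀ x) + (d x₀ y - d' x₀ y)
    linarith
  · rintro ⟨α, hα⟩ m x
    have key : ∑ i : Fin (m + 1), α (x (i + 1)) = ∑ i : Fin (m + 1), α (x i) :=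
      Fintype.sum_bijective (· + 1) (Equiv.addRight (1 : Fin (m + 1))).bijective
        _ _ (fun i => rfl)
    unfold cycLen
    rw [Finset.sum_congr rfl (fun i _ => hα (x i) (x (i + 1)))]
    rw [Finset.sum_add_distrib, Finset.sum_sub_distrib, key]
    ring
end

section
/- Let μ be a directed distance on a nonempty finite set S and let n be a positive integer. The following are equivalent: (a) there exist n+1 affinely independent points of ℝ^{S^{cr}} whose convex hull is contained in T_μ (i.e., dim T_μ ≥ n); (b) there exist n-element subsets A, B ⊆ S and a bijection σ : A → B such that for every matching M ⊆ A × B (a set of pairs in which distinct pairs share neither first nor second coordinates) with M ≠ { (a, σ(a)) : a ∈ A }, one has Σ_{(a,b) ∈ M} μ(a,b) < Σ_{a ∈ A} μ(a, σ(a)); that is, the maximum weight over all matchings of the complete bipartite graph on (A,B) with weights μ(a,b) is attained uniquely, by the perfect matching given by σ. -/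
open scoped BigOperators

/-!
A point `p` lies in `T_μ` exactly when its rows are the least nonnegative ones compatible with its
columns and vice versa (`mem_TT_iff`).

(a) ⇒ (b). Every vertex of the simplex is tight wherever its centroid `p` is, so the simplex moves
in the direction space of the smallest face of `P_μ` containing `p`. With its row coordinates
negated, a direction is constant on each component of the tight graph of `p` and vanishes on
components meeting a zero coordinate, so at least `n` components are free of zeros. A tight edge from each of them gives `A`, `B`, `σ`, and
weak duality with `p` shows that `σ` is the unique maximum matching.

(b) ⇒ (a). Unique optimality of `σ` means that every nontrivial permutation of the partners loses
weight, so longest paths provide strictly complementary dual potentials; these form a nonempty open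
set `U ⊆ ℝ^A`. Lowering rows and then columns from `x ∈ U` (extended by a large constant off `A`)
gives a point of `T_μ` with column coordinates `x` on `A`. This map is continuous and piecewise
affine, hence affine on an open subset of `U` by Baire's theorem, and the image of a simplex there
is an `n`-simplex in `T_μ`.
-/

open Finset

section TightSpan

variable {S : Type*} {μ : S → S → ℝ} {p : Pt S}

theorem fst_nonneg_of_mem_PP (hp : p ∈ PP μ) (s : S) : 0 ≤ p.1 s := hp.2.1 s

theorem snd_nonneg_of_mem_PP (hp : p ∈ PP μ) (t : S) : 0 ≤ p.2 t := hp.2.2 t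

variable [Fintype S] [Nonempty S]

variable (μ) in
/-- The least `r ≥ 0` with `(c, r) ∈ Π_μ`; `minRow (flip μ) r` is the least such column vector. -/
noncomputable def minRow (c : S → ℝ) (t : S) : ℝ :=
  max 0 (univ.sup' univ_nonempty fun s => μ s t - c s)

theorem minRow_le_iff {c : S → ℝ} {t : S} {r : ℝ} :
    minRow μ c t ≤ r ↔ 0 ≤ r ∧ ∀ s, μ s t - c s ≤ r := by
  simp [minRow, Finset.sup'_le_iff]

theorem minRow_nonneg (c : S → ℝ) (t : S) : 0 ≤ minRow μ c t :=
  le_max_left _ _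

theorem sub_le_minRow (c : S → ℝ) (s t : S) : μ s t - c s ≤ minRow μ c t :=
  (le_sup' (fun s => μ s t - c s) (mem_univ s)).trans (le_max_right _ _)

theorem minRow_antitone : Antitone (minRow μ) := fun _ _ hc t =>
  minRow_le_iff.2 ⟨minRow_nonneg _ t, fun s =>
    (sub_le_sub_left (hc s) _).trans (sub_le_minRow _ s t)⟩

theorem exists_eq_of_minRow_pos {c : S → ℝ} {t : S} (h : 0 < minRow μ c t) :
    ∃ s, minRow μ c t = μ s t - c s := by
  obtain ⟨s, -, hs⟩ := exists_mem_eq_sup' univ_nonempty fun s => μ s t - c s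
  rw [minRow, hs] at h ⊢
  exact ⟨s, max_eq_right ((lt_max_iff.1 h).resolve_left (lt_irrefl 0)).le⟩

theorem continuous_minRow : Continuous (minRow μ) :=
  continuous_pi fun _ => continuous_const.max
    (Continuous.finset_sup'_apply _ fun s _ => continuous_const.sub (continuous_apply s))

theorem mem_PP_iff : p ∈ PP μ ↔ 0 ≤ p.1 ∧ minRow μ p.1 ≤ p.2 := by
  simp only [PP, PiP, Pi.le_def, minRow_le_iff, Prod.le_def]
  constructor
  · rintro ⟨h, h1, h2⟩
    exact ⟨h1, fun t => ⟨h2 t, fun s => by linarith [h s t]⟩⟩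
  · rintro ⟨h1, h2⟩
    exact ⟨fun s t => by linarith [(h2 t).2 s], h1, fun t => (h2 t).1⟩

theorem mem_PP_iff' : p ∈ PP μ ↔ 0 ≤ p.2 ∧ minRow (flip μ) p.2 ≤ p.1 := by
  simp only [PP, PiP, Pi.le_def, minRow_le_iff, Prod.le_def, flip]
  constructor
  · rintro ⟨h, h1, h2⟩
    exact ⟨h2, fun s => ⟨h1 s, fun t => by linarith [h s t]⟩⟩
  · rintro ⟨h2, h1⟩
    exact ⟨fun s t => by linarith [(h1 s).2 t], fun s => (h1 s).1, h2⟩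

theorem mem_TT_iff : p ∈ TT μ ↔ p.1 = minRow (flip μ) p.2 ∧ p.2 = minRow μ p.1 := by
  constructor
  · rintro ⟨hp, hmin⟩
    have h1 := hmin (minRow (flip μ) p.2, p.2)
      (mem_PP_iff'.2 ⟨(mem_PP_iff'.1 hp).1, le_rfl⟩) ⟨(mem_PP_iff'.1 hp).2, le_rfl⟩
    have h2 := hmin (p.1, minRow μ p.1)
      (mem_PP_iff.2 ⟨(mem_PP_iff.1 hp).1, le_rfl⟩) ⟨le_rfl, (mem_PP_iff.1 hp).2⟩
    exact ⟨(congrArg Prod.fst h1).symm, (congrArg Prod.snd h2).symm⟩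
  · rintro ⟨h1, h2⟩
    refine ⟨mem_PP_iff.2 ⟨h1 ▸ fun s => minRow_nonneg _ s, h2.ge⟩, fun q hq hqp => ?_⟩
    have hq1 : p.1 ≤ q.1 := h1 ▸ (minRow_antitone hqp.2).trans (mem_PP_iff'.1 hq).2
    have hq2 : p.2 ≤ q.2 := h2 ▸ (minRow_antitone hqp.1).trans (mem_PP_iff.1 hq).2
    exact le_antisymm hqp ⟨hq1, hq2⟩

theorem exists_tight_of_fst_pos (hp : p ∈ TT μ) {s : S} (hs : 0 < p.1 s) :
    ∃ t, p.1 s + p.2 t = μ s t := by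
  rw [(mem_TT_iff.1 hp).1] at hs ⊢
  obtain ⟨t, ht⟩ := exists_eq_of_minRow_pos hs
  exact ⟨t, by rw [ht]; simp [flip]⟩

theorem exists_tight_of_snd_pos (hp : p ∈ TT μ) {t : S} (ht : 0 < p.2 t) :
    ∃ s, p.1 s + p.2 t = μ s t := by
  rw [(mem_TT_iff.1 hp).2] at ht ⊢
  obtain ⟨s, hs⟩ := exists_eq_of_minRow_pos ht
  exact ⟨s, by rw [hs]; ring⟩

variable (μ) in
noncomputable def tightPoint (c : S → ℝ) : Pt S :=
  (minRow (flip μ) (minRow μ c), minRow μ c)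

theorem continuous_tightPoint : Continuous (tightPoint μ) :=
  (continuous_minRow.comp continuous_minRow).prodMk continuous_minRow

theorem minRow_flip_minRow_le {c : S → ℝ} (hc : 0 ≤ c) : minRow (flip μ) (minRow μ c) ≤ c :=
  fun s => minRow_le_iff.2 ⟨hc s, fun t => by
    linarith [sub_le_minRow (μ := μ) c s t, show flip μ t s = μ s t from rfl]⟩

theorem tightPoint_mem_TT {c : S → ℝ} (hc : 0 ≤ c) : tightPoint μ c ∈ TT μ := by
  refine mem_TT_iff.2 ⟨rfl, le_antisymm (minRow_antitone (minRow_flip_minRow_le hc)) fun t => ?_⟩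
  exact minRow_le_iff.2 ⟨minRow_nonneg _ t, fun s => by
    dsimp only [tightPoint]
    linarith [sub_le_minRow (μ := flip μ) (minRow μ c) t s, show flip μ t s = μ s t from rfl]⟩

theorem tightPoint_fst_eq {c : S → ℝ} {a t : S} (hc : 0 ≤ c a) (hle : c a ≤ μ a t)
    (hmax : ∀ s, μ s t - c s ≤ μ a t - c a) : (tightPoint μ c).1 a = c a := by
  have hrow : minRow μ c t = μ a t - c a :=
    le_antisymm (minRow_le_iff.2 ⟨by linarith, hmax⟩) (sub_le_minRow c a t)
  refine le_antisymm (minRow_le_iff.2 ⟨hc, fun t' => ?_⟩) ?_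
  · linarith [sub_le_minRow (μ := μ) c a t', show flip μ t' a = μ a t' from rfl]
  · calc c a = flip μ t a - minRow μ c t := by rw [hrow, flip]; ring
      _ ≤ (tightPoint μ c).1 a := sub_le_minRow _ t a

end TightSpan

section PiecewiseAffine

variable {E F G : Type*} [AddCommGroup E] [Module ℝ E] [AddCommGroup F] [Module ℝ F]
  [AddCommGroup G] [Module ℝ G]

/-- `f` agrees at every point with one of finitely many affine maps; nothing is required of the
sets on which the pieces are used. -/
def IsPiecewiseAffine (f : E → F) : Prop :=
  ∃ P : Set (E →ᵃ[ℝ] F), P.Finite ∧ ∀ x, ∃ g ∈ P, f x = g x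

theorem AffineMap.isPiecewiseAffine (g : E →ᵃ[ℝ] F) : IsPiecewiseAffine g :=
  ⟨{g}, Set.finite_singleton g, fun _ => ⟨g, rfl, rfl⟩⟩

theorem isPiecewiseAffine_const (b : F) : IsPiecewiseAffine fun _ : E => b :=
  (AffineMap.const ℝ E b).isPiecewiseAffine

namespace IsPiecewiseAffine

theorem const_sub {f : E → ℝ} (hf : IsPiecewiseAffine f) (b : ℝ) :
    IsPiecewiseAffine fun x => b - f x := by
  obtain ⟨P, hP, hfP⟩ := hf
  refine ⟨(AffineMap.const ℝ E b - ·) '' P, hP.image _, fun x => ?_⟩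
  obtain ⟨g, hg, hfg⟩ := hfP x
  exact ⟨_, Set.mem_image_of_mem _ hg, by simp [hfg]⟩

theorem max {f g : E → ℝ} (hf : IsPiecewiseAffine f) (hg : IsPiecewiseAffine g) :
    IsPiecewiseAffine fun x => max (f x) (g x) := by
  obtain ⟨P, hP, hfP⟩ := hf
  obtain ⟨Q, hQ, hgQ⟩ := hg
  refine ⟨P ∪ Q, hP.union hQ, fun x => ?_⟩
  rcases le_total (f x) (g x) with h | h
  · obtain ⟨k, hk, hgk⟩ := hgQ x
    exact ⟨k, Or.inr hk, (max_eq_right h).trans hgk⟩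
  · obtain ⟨k, hk, hfk⟩ := hfP x
    exact ⟨k, Or.inl hk, (max_eq_left h).trans hfk⟩

theorem finset_sup' {ι : Type*} {s : Finset ι} (hs : s.Nonempty) {f : ι → E → ℝ}
    (hf : ∀ i, IsPiecewiseAffine (f i)) :
    IsPiecewiseAffine fun x => s.sup' hs fun i => f i x := by
  choose P hP hfP using hf
  refine ⟨⋃ i ∈ s, P i, s.finite_toSet.biUnion fun i _ => hP i, fun x => ?_⟩
  obtain ⟨i, hi, hfi⟩ := exists_mem_eq_sup' hs fun i => f i x
  obtain ⟨g, hg, hfg⟩ := hfP i x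
  exact ⟨g, Set.mem_biUnion hi hg, hfi.trans hfg⟩

theorem pi {ι : Type*} [Finite ι] {f : E → ι → ℝ}
    (hf : ∀ i, IsPiecewiseAffine fun x => f x i) : IsPiecewiseAffine f := by
  choose P hP hfP using hf
  refine ⟨AffineMap.pi '' Set.univ.pi P, (Set.Finite.pi hP).image _, fun x => ?_⟩
  choose g hg hfg using fun i => hfP i x
  exact ⟨AffineMap.pi g, Set.mem_image_of_mem _ fun i _ => hg i, funext hfg⟩

theorem prodMk {f : E → F} {g : E → G} (hf : IsPiecewiseAffine f) (hg : IsPiecewiseAffine g) :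
    IsPiecewiseAffine fun x => (f x, g x) := by
  obtain ⟨P, hP, hfP⟩ := hf
  obtain ⟨Q, hQ, hgQ⟩ := hg
  refine ⟨Set.image2 AffineMap.prod P Q, hP.image2 _ hQ, fun x => ?_⟩
  obtain ⟨k, hk, hfk⟩ := hfP x
  obtain ⟨l, hl, hgl⟩ := hgQ x
  exact ⟨_, Set.mem_image2_of_mem hk hl, by simp [hfk, hgl]⟩

variable {S : Type*} [Fintype S] [Nonempty S] {μ : S → S → ℝ}

theorem minRow {g : E → S → ℝ} (hg : ∀ s, IsPiecewiseAffine fun x => g x s) (t : S) :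
    IsPiecewiseAffine fun x => minRow μ (g x) t :=
  (isPiecewiseAffine_const 0).max (.finset_sup' _ fun s => (hg s).const_sub (μ s t))

theorem tightPoint {g : E → S → ℝ} (hg : ∀ s, IsPiecewiseAffine fun x => g x s) :
    IsPiecewiseAffine fun x => tightPoint μ (g x) :=
  .prodMk (.pi (.minRow (.minRow hg))) (.pi (.minRow hg))

end IsPiecewiseAffine

end PiecewiseAffine

section Simplex

open Set Module

variable {E F : Type*} [NormedAddCommGroup E] [NormedSpace ℝ E] [FiniteDimensional ℝ E]
  [NormedAddCommGroup F] [NormedSpace ℝ F]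

theorem IsOpen.exists_affineIndependent_convexHull_subset {U : Set E} (hU : IsOpen U)
    (hne : U.Nonempty) :
    ∃ v : Fin (finrank ℝ E + 1) → E, AffineIndependent ℝ v ∧ convexHull ℝ (range v) ⊆ U := by
  obtain ⟨x, hx⟩ := hne
  obtain ⟨r, hr, hball⟩ := Metric.isOpen_iff.1 hU x hx
  obtain ⟨s, hs, hind, hspan⟩ :=
    Metric.isOpen_ball.exists_subset_affineIndependent_span_eq_top ⟨x, Metric.mem_ball_self hr⟩
  let b : AffineBasis s ℝ E := ⟨Subtype.val, hind, by rwa [Subtype.range_coe]⟩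
  have : Fintype s := @Fintype.ofFinite _ b.finite
  let e := Fintype.equivFinOfCardEq b.card_eq_finrank_add_one
  refine ⟨Subtype.val ∘ e.symm, hind.comp_embedding e.symm.toEmbedding, ?_⟩
  rw [EquivLike.range_comp, Subtype.range_coe]
  exact (convexHull_min hs (convex_ball x r)).trans hball

theorem IsPiecewiseAffine.exists_eqOn {f : E → F} (hf : IsPiecewiseAffine f) (hfc : Continuous f)
    {U : Set E} (hU : IsOpen U) (hne : U.Nonempty) :
    ∃ g : E →ᵃ[ℝ] F, ∃ V ⊆ U, IsOpen V ∧ V.Nonempty ∧ EqOn f g V := by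
  obtain ⟨P, hP, hfP⟩ := hf
  have : Countable P := hP.countable.to_subtype
  have hdense := dense_iUnion_interior_of_closed (f := fun g : P => {x | f x = g.1 x})
    (fun g => isClosed_eq hfc g.1.continuous_of_finiteDimensional)
    (eq_univ_of_forall fun x => by
      obtain ⟨g, hg, hfg⟩ := hfP x
      exact mem_iUnion.2 ⟨⟨g, hg⟩, hfg⟩)
  obtain ⟨x, hxU, hx⟩ := hdense.inter_open_nonempty U hU hne
  obtain ⟨g, hxg⟩ := mem_iUnion.1 hx
  exact ⟨g, U ∩ interior _, inter_subset_left, hU.inter isOpen_interior, ⟨x, hxU, hxg⟩,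
    fun y hy => interior_subset (s := {x | f x = g.1 x}) hy.2⟩

theorem IsPiecewiseAffine.exists_affineIndependent_convexHull_subset_image {f : E → F}
    (hf : IsPiecewiseAffine f) (hfc : Continuous f) {U : Set E} (hU : IsOpen U)
    (hne : U.Nonempty) (ψ : F →ᵃ[ℝ] E) (hψ : ∀ x ∈ U, ψ (f x) = x) :
    ∃ v : Fin (finrank ℝ E + 1) → F, AffineIndependent ℝ v ∧ convexHull ℝ (range v) ⊆ f '' U := by
  obtain ⟨g, V, hVU, hV, hVne, hfg⟩ := hf.exists_eqOn hfc hU hne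
  obtain ⟨w, hw, hwV⟩ := hV.exists_affineIndependent_convexHull_subset hVne
  have hwV' : ∀ i, w i ∈ V := fun i => hwV (subset_convexHull ℝ _ (mem_range_self i))
  refine ⟨g ∘ w, AffineIndependent.of_comp ψ ?_, ?_⟩
  · convert hw using 1
    funext i
    simp only [Function.comp_apply, ← hfg (hwV' i)]
    exact hψ _ (hVU (hwV' i))
  · rw [range_comp, ← AffineMap.image_convexHull]
    rintro _ ⟨x, hx, rfl⟩
    exact ⟨x, hVU (hwV hx), hfg (hwV hx)⟩

end Simplex

section Potential

open Filter Topology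

variable {V : Type*} (W : V → V → ℝ)

def pathWeight : List V → ℝ
  | x :: y :: l => W x y + pathWeight (y :: l)
  | _ => 0

theorem pathWeight_append_cons (x : V) (t : List V) :
    ∀ s : List V, pathWeight W (s ++ x :: t) = pathWeight W (s ++ [x]) + pathWeight W (x :: t)
  | [] => by simp [pathWeight]
  | [a] => by simp [pathWeight]
  | a :: b :: s => by
    simp only [List.cons_append, pathWeight]
    rw [← List.cons_append, pathWeight_append_cons x t (b :: s), List.cons_append]
    ring

theorem exists_longest_path [Fintype V] (y : V) :
    ∃ t : List V, (y :: t).Nodup ∧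
      ∀ t', (y :: t').Nodup → pathWeight W (y :: t') ≤ pathWeight W (y :: t) := by
  have hfin : {t : List V | (y :: t).Nodup}.Finite :=
    (List.finite_length_le V (Fintype.card V)).subset fun t ht =>
      (List.nodup_cons.1 ht).2.length_le_card
  exact Set.exists_max_image _ (fun t => pathWeight W (y :: t)) hfin ⟨[], List.nodup_singleton y⟩

variable {W} [Fintype V] [DecidableEq V]

theorem sum_formPerm_eq_pathWeight (hdiag : ∀ x, W x x = 0) :
    ∀ (x : V) (l : List V), (x :: l).Nodup →
      ∑ z, W z ((x :: l).formPerm z) = pathWeight W (x :: l) + W ((x :: l).getLast (by simp)) x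
  | x, [], _ => by simp [hdiag, pathWeight]
  | x, y :: l, hnd => by
    set e := (y :: l).getLast (by simp)
    have hx : x ∉ y :: l := (List.nodup_cons.1 hnd).1
    have he : (y :: l).formPerm e = y := List.formPerm_apply_getLast y l
    have hxe : x ≠ e := fun h => hx (h ▸ List.getLast_mem _)
    -- `formPerm (x :: y :: l)` is `formPerm (y :: l)` with `x` inserted between `e` and `y`
    have key : ∀ z, W z ((x :: y :: l).formPerm z) + (if z = e then W e y else 0) =
        W z ((y :: l).formPerm z) + (if z = e then W e x else 0) +
          (if z = x then W x y else 0) := by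
      intro z
      rw [List.formPerm_cons_cons, Equiv.Perm.mul_apply]
      by_cases hze : z = e
      · subst hze
        simp [he, Ne.symm hxe, add_comm]
      by_cases hzx : z = x
      · subst hzx
        simp [List.formPerm_apply_of_notMem hx, hxe, hdiag]
      have h1 : (y :: l).formPerm z ≠ y := fun h =>
        hze ((y :: l).formPerm.injective (h.trans he.symm))
      have h2 : (y :: l).formPerm z ≠ x := fun h =>
        hzx ((y :: l).formPerm.injective (h.trans (List.formPerm_apply_of_notMem hx).symm))
      simp [Equiv.swap_apply_of_ne_of_ne h2 h1, hze, hzx]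
    have hsum := Finset.sum_congr rfl fun z (_ : z ∈ univ) => key z
    simp only [Finset.sum_add_distrib, Finset.sum_ite_eq', Finset.mem_univ, if_true] at hsum
    rw [sum_formPerm_eq_pathWeight hdiag y l (List.nodup_cons.1 hnd).2] at hsum
    simp only [pathWeight, List.getLast_cons (List.cons_ne_nil y l)]
    linarith

/-- The potential of `y` is minus the weight of a longest simple path starting at `y`. -/
theorem exists_potential_of_sum_perm_nonpos (hdiag : ∀ x, W x x = 0)
    (hW : ∀ π : Equiv.Perm V, ∑ x, W x (π x) ≤ 0) : ∃ p : V → ℝ, ∀ x y, p x + W x y ≤ p y := by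
  choose best hbest hmax using exists_longest_path W
  refine ⟨fun y => -pathWeight W (y :: best y), fun x y => ?_⟩
  rcases eq_or_ne x y with rfl | hxy
  · simp [hdiag]
  suffices pathWeight W (y :: best y) + W x y ≤ pathWeight W (x :: best x) by linarith
  by_cases hx : x ∈ y :: best y
  · -- the longest path from `y` runs through `x`: it splits into a cycle and a path from `x`
    obtain ⟨s, t, hst⟩ := List.append_of_mem ((List.mem_cons.1 hx).resolve_left hxy)
    have hnd : (y :: (s ++ x :: t)).Nodup := hst ▸ hbest y
    have hcyc := sum_formPerm_eq_pathWeight hdiag y (s ++ [x])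
      (hnd.sublist ((((List.nil_sublist t).cons_cons x).append_left s).cons_cons y))
    have hpath := hmax x t (hnd.sublist ((List.sublist_append_right s (x :: t)).cons y))
    rw [hst, ← List.cons_append, pathWeight_append_cons W x t (y :: s), List.cons_append]
    rw [show (y :: (s ++ [x])).getLast (by simp) = x by simp] at hcyc
    linarith [hW (y :: (s ++ [x])).formPerm]
  · have := hmax x (y :: best y) (List.nodup_cons.2 ⟨hx, hbest y⟩)
    simp only [pathWeight] at this
    linarith

theorem exists_potential_of_sum_perm_neg (hdiag : ∀ x, W x x = 0)
    (hW : ∀ π : Equiv.Perm V, π ≠ 1 → ∑ x, W x (π x) < 0) :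
    ∃ p : V → ℝ, ∀ x y, x ≠ y → p x + W x y < p y := by
  -- raise the off-diagonal weights by a small `ε` and use the non-strict version
  have hev : ∀ᶠ ε in 𝓝 (0 : ℝ), ∀ π : Equiv.Perm V, π ≠ 1 →
      ∑ x, W x (π x) + Fintype.card V * ε < 0 := by
    refine eventually_all.2 fun π => ?_
    by_cases hπ : π = 1
    · exact Eventually.of_forall fun _ h => absurd hπ h
    have : Tendsto (fun ε : ℝ => ∑ x, W x (π x) + Fintype.card V * ε) (𝓝 0)
        (𝓝 (∑ x, W x (π x))) := by
      simpa using ((continuous_const.mul continuous_id).const_add (∑ x, W x (π x))).tendsto 0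
    exact (this.eventually_lt_const (hW π hπ)).mono fun _ h _ => h
  obtain ⟨ε, hεπ, hε⟩ := ((eventually_nhdsWithin_of_eventually_nhds hev).and
    self_mem_nhdsWithin).exists (f := 𝓝[>] (0 : ℝ))
  obtain ⟨p, hp⟩ := exists_potential_of_sum_perm_nonpos
    (W := fun x y => if x = y then 0 else W x y + ε) (by simp) fun π => by
      by_cases hπ : π = 1
      · simp [hπ]
      calc ∑ x, (if x = π x then 0 else W x (π x) + ε) ≤ ∑ x, (W x (π x) + ε) :=
            sum_le_sum fun x _ => by
              split_ifs with h
              · rw [← h, hdiag]; linarith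
              · exact le_rfl
        _ = ∑ x, W x (π x) + Fintype.card V * ε := by
            rw [sum_add_distrib, sum_const, card_univ, nsmul_eq_mul]
        _ ≤ 0 := (hεπ π hπ).le
  refine ⟨p, fun x y hxy => ?_⟩
  have := hp x y
  simp only [hxy, if_false] at this
  linarith

end Potential

theorem exists_forall_lt_and_lt {ι : Type*} [Finite ι] {f g : ι → ℝ} (h : ∀ i j, f i < g j) :
    ∃ c, ∀ i, f i < c ∧ c < g i := by
  cases isEmpty_or_nonempty ι
  · exact ⟨0, isEmptyElim⟩
  have := Fintype.ofFinite ι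
  have hfg : univ.sup' univ_nonempty f < univ.inf' univ_nonempty g :=
    (sup'_lt_iff _).2 fun i _ => (lt_inf'_iff _).2 fun j _ => h i j
  refine ⟨(univ.sup' univ_nonempty f + univ.inf' univ_nonempty g) / 2, fun i => ⟨?_, ?_⟩⟩
  · linarith [le_sup' f (mem_univ i)]
  · linarith [inf'_le g (mem_univ i)]

theorem eq_of_sum_mul_eq {ι : Type*} [Fintype ι] {w x : ι → ℝ} {b : ℝ} (hw : ∀ i, 0 < w i)
    (hw1 : ∑ i, w i = 1) (hx : ∀ i, b ≤ x i) (h : ∑ i, w i * x i = b) (i : ι) : x i = b := by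
  have hsum : ∑ i, w i * (x i - b) = 0 := by
    simp only [mul_sub, sum_sub_distrib, ← sum_mul, hw1, h, one_mul, sub_self]
  have := (sum_eq_zero_iff_of_nonneg fun i _ => mul_nonneg (hw i).le (sub_nonneg.2 (hx i))).1
    hsum i (mem_univ i)
  linarith [(mul_eq_zero.1 this).resolve_left (hw i).ne']

theorem bijOn_extend_image {α ι : Type*} {f g : ι → α} (hf : Function.Injective f)
    (hg : Function.Injective g) (T : Set ι) : Set.BijOn (Function.extend f g id) (f '' T) (g '' T) := by
  refine ⟨?_, ?_, ?_⟩
  · rintro _ ⟨c, hc, rfl⟩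
    exact ⟨c, hc, (hf.extend_apply _ _ c).symm⟩
  · rintro _ ⟨c, -, rfl⟩ _ ⟨c', -, rfl⟩ h
    rw [hf.extend_apply, hf.extend_apply] at h
    rw [hg h]
  · rintro _ ⟨c, hc, rfl⟩
    exact ⟨f c, ⟨c, hc, rfl⟩, hf.extend_apply _ _ c⟩

section Matching

open Set

variable {S : Type*} {μ : S → S → ℝ} {A B : Finset S} {σ : S → S}

def IsMatching (M : Finset (S × S)) : Prop :=
  ∀ p ∈ M, ∀ q ∈ M, p ≠ q → p.1 ≠ q.1 ∧ p.2 ≠ q.2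

variable (μ A σ) in
/-- With `v (σ a) := μ a (σ a) - x a`, the pair `(x, v)` is a strictly complementary solution of
the dual of the matching problem on `A × B`: `x > 0`, `v > 0`, and `x a' + v b > μ a' b` for
`b ≠ σ a'`. -/
def IsStrictDual (x : A → ℝ) : Prop :=
  ∀ a : A, 0 < x a ∧ x a < μ a (σ a) ∧ ∀ a' : A, a' ≠ a → μ a' (σ a) - x a' < μ a (σ a) - x a

theorem isOpen_setOf_isStrictDual : IsOpen {x | IsStrictDual μ A σ x} := by
  simp only [IsStrictDual, ofPred_forall, ofPred_and]
  exact isOpen_iInter_of_finite fun a => (isOpen_lt continuous_const (continuous_apply a)).inter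
    ((isOpen_lt (continuous_apply a) continuous_const).inter (isOpen_iInter_of_finite fun a' =>
      isOpen_iInter_of_finite fun _ =>
        isOpen_lt (continuous_const.sub (continuous_apply a'))
          (continuous_const.sub (continuous_apply a))))

variable [DecidableEq S]

variable (μ A B σ) in
def IsUniqueMaxMatching : Prop :=
  ∀ M : Finset (S × S), ↑M ⊆ (↑A ×ˢ ↑B : Set (S × S)) → IsMatching M →
    M ≠ A.image (fun a => (a, σ a)) → ∑ p ∈ M, μ p.1 p.2 < ∑ a ∈ A, μ a (σ a)

theorem isMatching_image_graph (hσ : InjOn σ A) : IsMatching (A.image fun a => (a, σ a)) := by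
  simp only [IsMatching, Finset.mem_image]
  rintro _ ⟨a, ha, rfl⟩ _ ⟨b, hb, rfl⟩ hab
  have hab : a ≠ b := fun h => hab (h ▸ rfl)
  exact ⟨hab, fun h => hab (hσ ha hb h)⟩

theorem IsUniqueMaxMatching.weight_pos (huniq : IsUniqueMaxMatching μ A B σ)
    (hbij : BijOn σ A B) {a : S} (ha : a ∈ A) : 0 < μ a (σ a) := by
  set Mσ := A.image fun a => (a, σ a)
  have hmem : (a, σ a) ∈ Mσ := mem_image_of_mem _ ha
  have hsub : ↑(Mσ.erase (a, σ a)) ⊆ (↑A ×ˢ ↑B : Set (S × S)) := by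
    intro p hp
    obtain ⟨b, hb, rfl⟩ := Finset.mem_image.1 (mem_of_mem_erase hp)
    exact ⟨hb, hbij.mapsTo hb⟩
  have hlt := huniq _ hsub (fun p hp q hq => isMatching_image_graph hbij.injOn p
    (mem_of_mem_erase hp) q (mem_of_mem_erase hq))
    (fun h => notMem_erase (a, σ a) Mσ (by rw [h]; exact hmem))
  have hsum : ∑ p ∈ Mσ.erase (a, σ a), μ p.1 p.2 + μ a (σ a) = ∑ a ∈ A, μ a (σ a) := by
    rw [sum_erase_add _ _ hmem, sum_image fun _ _ _ _ h => congrArg Prod.fst h]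
  linarith

theorem IsUniqueMaxMatching.sum_perm_sub_neg (huniq : IsUniqueMaxMatching μ A B σ)
    (hbij : BijOn σ A B) {π : Equiv.Perm A} (hπ : π ≠ 1) :
    ∑ a : A, (μ a (σ (π a)) - μ (π a) (σ (π a))) < 0 := by
  set M := (univ : Finset A).image fun a : A => ((a : S), σ (π a))
  have hsub : ↑M ⊆ (↑A ×ˢ ↑B : Set (S × S)) := by
    intro p hp
    obtain ⟨a, -, rfl⟩ := Finset.mem_image.1 hp
    exact ⟨a.2, hbij.mapsTo (π a).2⟩
  have hmatch : IsMatching M := by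
    simp only [IsMatching, M, Finset.mem_image]
    rintro _ ⟨a, -, rfl⟩ _ ⟨b, -, rfl⟩ hab
    have hab : a ≠ b := fun h => hab (h ▸ rfl)
    exact ⟨Subtype.coe_injective.ne hab,
      fun h => hab (π.injective (Subtype.ext (hbij.injOn (π a).2 (π b).2 h)))⟩
  have hne : M ≠ A.image fun a => (a, σ a) := by
    intro h
    refine hπ (Equiv.ext fun a => Subtype.ext ?_)
    have : ((a : S), σ (π a)) ∈ A.image fun a => (a, σ a) :=
      h ▸ mem_image_of_mem _ (mem_univ a)
    obtain ⟨b, hb, hba⟩ := Finset.mem_image.1 this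
    obtain ⟨rfl, hσ⟩ := Prod.ext_iff.1 hba
    exact hbij.injOn (π a).2 a.2 hσ.symm
  have hM : ∑ p ∈ M, μ p.1 p.2 = ∑ a : A, μ a (σ (π a)) :=
    sum_image fun a _ b _ h => Subtype.ext (congrArg Prod.fst h)
  have hσ : ∑ a ∈ A, μ a (σ a) = ∑ a : A, μ (π a) (σ (π a)) := by
    rw [← sum_coe_sort A]
    exact (Equiv.sum_comp π fun a : A => μ a (σ a)).symm
  rw [sum_sub_distrib]
  linarith [huniq M hsub hmatch hne]

theorem IsUniqueMaxMatching.exists_isStrictDual (huniq : IsUniqueMaxMatching μ A B σ)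
    (hbij : BijOn σ A B) (hμ : ∀ s t, 0 ≤ μ s t) : ∃ x, IsStrictDual μ A σ x := by
  -- `W a a'` is the weight gained by matching `a` instead of `a'` to `σ a'`
  obtain ⟨p, hp⟩ := exists_potential_of_sum_perm_neg
    (W := fun a a' : A => μ a (σ a') - μ a' (σ a')) (fun _ => sub_self _)
    fun π hπ => huniq.sum_perm_sub_neg hbij hπ
  obtain ⟨c, hc⟩ := exists_forall_lt_and_lt (f := p) (g := fun a => μ a (σ a) + p a)
    fun a a' => by
      rcases eq_or_ne a a' with rfl | h
      · linarith [huniq.weight_pos hbij a.2]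
      · linarith [hp a a' h, hμ a (σ a')]
  refine ⟨fun a => c - p a, fun a => ⟨by linarith [hc a], by linarith [hc a], fun a' h => ?_⟩⟩
  linarith [hp a' a h]

/-- Weak duality, with complementary slackness exactly on the matching `σ`. -/
theorem isUniqueMaxMatching_of_tight {p : Pt S} (hp : p ∈ PP μ) (hμ : ∀ s t, 0 ≤ μ s t)
    (hbij : BijOn σ A B) (htight : ∀ a ∈ A, p.1 a + p.2 (σ a) = μ a (σ a))
    (honly : ∀ a ∈ A, ∀ b ∈ B, p.1 a + p.2 b = μ a b → b = σ a)
    (hpos : ∀ a ∈ A, 0 < μ a (σ a)) : IsUniqueMaxMatching μ A B σ := by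
  intro M hM hmatch hne
  have hMA : ∀ m ∈ M, m.1 ∈ A ∧ m.2 ∈ B := fun m hm => hM hm
  by_cases hall : ∀ m ∈ M, p.1 m.1 + p.2 m.2 = μ m.1 m.2
  · have hsub : M ⊆ A.image fun a => (a, σ a) := fun m hm => Finset.mem_image.2
      ⟨m.1, (hMA m hm).1, Prod.ext rfl (honly _ (hMA m hm).1 _ (hMA m hm).2 (hall m hm)).symm⟩
    obtain ⟨e, he, heM⟩ := exists_of_ssubset (ssubset_iff_subset_ne.2 ⟨hsub, hne⟩)
    obtain ⟨a, ha, rfl⟩ := Finset.mem_image.1 he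
    calc ∑ m ∈ M, μ m.1 m.2 < ∑ m ∈ A.image fun a => (a, σ a), μ m.1 m.2 :=
          sum_lt_sum_of_subset hsub he heM (hpos a ha) fun m _ _ => hμ _ _
      _ = ∑ a ∈ A, μ a (σ a) := sum_image fun _ _ _ _ h => congrArg Prod.fst h
  push Not at hall
  obtain ⟨m₀, hm₀, hne₀⟩ := hall
  have hfst : ∑ m ∈ M, p.1 m.1 ≤ ∑ a ∈ A, p.1 a := by
    rw [← sum_image fun x hx y hy hxy => by_contra fun h => (hmatch x hx y hy h).1 hxy]
    exact sum_le_sum_of_subset_of_nonneg (image_subset_iff.2 fun m hm => (hMA m hm).1)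
      fun a _ _ => fst_nonneg_of_mem_PP hp a
  have hsnd : ∑ m ∈ M, p.2 m.2 ≤ ∑ b ∈ B, p.2 b := by
    rw [← sum_image fun x hx y hy hxy => by_contra fun h => (hmatch x hx y hy h).2 hxy]
    exact sum_le_sum_of_subset_of_nonneg (image_subset_iff.2 fun m hm => (hMA m hm).2)
      fun b _ _ => snd_nonneg_of_mem_PP hp b
  calc ∑ m ∈ M, μ m.1 m.2 < ∑ m ∈ M, (p.1 m.1 + p.2 m.2) :=
        sum_lt_sum (fun m _ => hp.1 m.1 m.2) ⟨m₀, hm₀, lt_of_le_of_ne (hp.1 _ _) hne₀.symm⟩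
    _ ≤ ∑ a ∈ A, p.1 a + ∑ b ∈ B, p.2 b := sum_add_distrib.trans_le (add_le_add hfst hsnd)
    _ = ∑ a ∈ A, μ a (σ a) := by
      rw [← sum_nbij σ hbij.mapsTo hbij.injOn hbij.surjOn fun _ _ => rfl, ← sum_add_distrib]
      exact sum_congr rfl htight

end Matching

section Backward

open Set

variable {S : Type*} [DecidableEq S]

def extendConst (A : Finset S) (K : ℝ) (x : A → ℝ) (s : S) : ℝ :=
  if h : s ∈ A then x ⟨s, h⟩ else K

theorem continuous_extendConst (A : Finset S) (K : ℝ) : Continuous (extendConst A K) :=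
  continuous_pi fun s => by
    by_cases h : s ∈ A
    · simpa [extendConst, h] using continuous_apply (⟨s, h⟩ : A)
    · simpa [extendConst, h] using continuous_const

theorem isPiecewiseAffine_extendConst_apply (A : Finset S) (K : ℝ) (s : S) :
    IsPiecewiseAffine fun x => extendConst A K x s := by
  by_cases h : s ∈ A
  · simpa [extendConst, h] using
      (LinearMap.proj (R := ℝ) (φ := fun _ : A => ℝ) ⟨s, h⟩).toAffineMap.isPiecewiseAffine
  · simpa [extendConst, h] using isPiecewiseAffine_const (E := A → ℝ) K

variable [Fintype S] [Nonempty S] {μ : S → S → ℝ} {A B : Finset S} {σ : S → S}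

theorem tightPoint_extendConst_fst {K : ℝ} (hK : ∀ s t, μ s t ≤ K) {x : A → ℝ}
    (hx : IsStrictDual μ A σ x) (a : A) : (tightPoint μ (extendConst A K x)).1 a = x a := by
  obtain ⟨hpos, hlt, hmax⟩ := hx a
  have ha : extendConst A K x a = x a := by simp [extendConst]
  rw [tightPoint_fst_eq (t := σ a) (ha ▸ hpos.le) (ha ▸ hlt.le), ha]
  intro s
  rw [ha]
  by_cases hs : s ∈ A
  · rcases eq_or_ne (⟨s, hs⟩ : A) a with rfl | h
    · simp [extendConst, hs]
    · simpa [extendConst, hs] using (hmax _ h).le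
  · simp only [extendConst, hs, dif_neg, not_false_eq_true]
    linarith [hK s (σ a)]

theorem IsUniqueMaxMatching.exists_simplex (huniq : IsUniqueMaxMatching μ A B σ)
    (hbij : BijOn σ A B) (hμ : ∀ s t, 0 ≤ μ s t) :
    ∃ f : Fin (A.card + 1) → Pt S, AffineIndependent ℝ f ∧ convexHull ℝ (range f) ⊆ TT μ := by
  set K := ∑ s, ∑ t, μ s t
  have hK0 : 0 ≤ K := sum_nonneg fun s _ => sum_nonneg fun t _ => hμ s t
  have hK : ∀ s t, μ s t ≤ K := fun s t =>
    (single_le_sum (fun t _ => hμ s t) (mem_univ t)).trans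
      (single_le_sum (fun s _ => sum_nonneg fun t _ => hμ s t) (mem_univ s))
  let ψ : Pt S →ᵃ[ℝ] (A → ℝ) :=
    (LinearMap.funLeft ℝ ℝ Subtype.val ∘ₗ LinearMap.fst ℝ _ _).toAffineMap
  obtain ⟨x₀, hx₀⟩ := huniq.exists_isStrictDual hbij hμ
  have key := (IsPiecewiseAffine.tightPoint (μ := μ) (isPiecewiseAffine_extendConst_apply A K))
    |>.exists_affineIndependent_convexHull_subset_image
      (continuous_tightPoint.comp (continuous_extendConst A K)) isOpen_setOf_isStrictDual
      ⟨x₀, hx₀⟩ ψ fun x hx => funext (tightPoint_extendConst_fst hK hx)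
  rw [Module.finrank_fintype_fun_eq_card, Fintype.card_coe] at key
  obtain ⟨f, hf, hfT⟩ := key
  refine ⟨f, hf, hfT.trans (image_subset_iff.2 fun x hx => tightPoint_mem_TT fun s => ?_)⟩
  by_cases hs : s ∈ A
  · simpa [extendConst, hs] using (hx ⟨s, hs⟩).1.le
  · simpa [extendConst, hs] using hK0

end Backward

section Forward

open Set Module SimpleGraph

variable {S : Type*} {μ : S → S → ℝ} {p : Pt S}

variable (μ p) in
/-- Vertices `inl s` stand for the column coordinates and `inr t` for the row coordinates of `p`;
edges join the pairs where `p` meets `p.1 s + p.2 t ≥ μ s t` with equality. -/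
def tightGraph : SimpleGraph (S ⊕ S) :=
  SimpleGraph.fromRel fun v w => ∃ s t, v = .inl s ∧ w = .inr t ∧ p.1 s + p.2 t = μ s t

theorem tightGraph_adj_inl_inr {s t : S} :
    (tightGraph μ p).Adj (.inl s) (.inr t) ↔ p.1 s + p.2 t = μ s t := by
  simp [tightGraph]

def IsFreeComponent (c : (tightGraph μ p).ConnectedComponent) : Prop :=
  ∀ v, (tightGraph μ p).connectedComponentMk v = c → Sum.elim p.1 p.2 v ≠ 0

variable (μ p) in
/-- The direction space of the smallest face of `P_μ` containing `p`. -/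
def faceDirection : Submodule ℝ (Pt S) where
  carrier := {d | (∀ s t, p.1 s + p.2 t = μ s t → d.1 s + d.2 t = 0) ∧
    (∀ s, p.1 s = 0 → d.1 s = 0) ∧ (∀ t, p.2 t = 0 → d.2 t = 0)}
  add_mem' := by
    rintro d e ⟨hd, hd1, hd2⟩ ⟨he, he1, he2⟩
    refine ⟨fun s t h => ?_, fun s h => ?_, fun t h => ?_⟩
    · simp only [Prod.fst_add, Prod.snd_add, Pi.add_apply]
      linarith [hd s t h, he s t h]
    · simp [hd1 s h, he1 s h]
    · simp [hd2 t h, he2 t h]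
  zero_mem' := by simp
  smul_mem' := by
    rintro c d ⟨hd, hd1, hd2⟩
    refine ⟨fun s t h => ?_, fun s h => by simp [hd1 s h], fun t h => by simp [hd2 t h]⟩
    simp only [Prod.smul_fst, Prod.smul_snd, Pi.smul_apply, smul_eq_mul, ← mul_add, hd s t h,
      mul_zero]

variable (S) in
/-- Negating the row coordinates makes `signedCoord S d` constant on the components of the tight
graph when `d ∈ faceDirection μ p`. -/
def signedCoord : Pt S →ₗ[ℝ] (S ⊕ S → ℝ) where
  toFun d := Sum.elim d.1 (-d.2)
  map_add' d e := by ext (s | t) <;> simp [add_comm]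
  map_smul' c d := by ext (s | t) <;> simp

theorem signedCoord_eq_of_reachable {d : Pt S} (hd : d ∈ faceDirection μ p) {v w : S ⊕ S}
    (h : (tightGraph μ p).Reachable v w) : signedCoord S d v = signedCoord S d w := by
  obtain ⟨q⟩ := h
  induction q with
  | nil => rfl
  | cons hadj _ ih =>
    refine Eq.trans ?_ ih
    obtain ⟨-, ⟨s, t, rfl, rfl, h⟩ | ⟨s, t, rfl, rfl, h⟩⟩ := (fromRel_adj _ _ _).1 hadj
    all_goals simp only [signedCoord, LinearMap.coe_mk, AddHom.coe_mk, Sum.elim_inl,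
      Sum.elim_inr, Pi.neg_apply]
    all_goals linarith [hd.1 s t h]

theorem finrank_faceDirection_le [Finite S] (p : Pt S) :
    finrank ℝ (faceDirection μ p) ≤
      Nat.card {c : (tightGraph μ p).ConnectedComponent // IsFreeComponent c} := by
  classical
  have := Fintype.ofFinite {c : (tightGraph μ p).ConnectedComponent // IsFreeComponent c}
  rw [Nat.card_eq_fintype_card, ← Module.finrank_fintype_fun_eq_card ℝ]
  refine LinearMap.finrank_le_finrank_of_injective
    (f := (LinearMap.pi fun c => LinearMap.proj c.1.out) ∘ₗ signedCoord S ∘ₗ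
      (faceDirection μ p).subtype) ?_
  rw [← LinearMap.ker_eq_bot, Submodule.eq_bot_iff]
  intro d hd
  have hzero : ∀ v, signedCoord S d v = 0 := by
    intro v
    by_cases hfree : IsFreeComponent ((tightGraph μ p).connectedComponentMk v)
    · rw [signedCoord_eq_of_reachable d.2 (ConnectedComponent.exact
        ((tightGraph μ p).connectedComponentMk v).out_eq.symm)]
      exact congrFun hd ⟨_, hfree⟩
    · simp only [IsFreeComponent, not_forall, not_not, exists_prop] at hfree
      obtain ⟨w, hw, hw0⟩ := hfree
      rw [signedCoord_eq_of_reachable d.2 (ConnectedComponent.exact hw.symm)]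
      rcases w with s | t
      · simpa [signedCoord] using d.2.2.1 s hw0
      · simpa [signedCoord] using d.2.2.2 t hw0
  ext s <;> [exact hzero (.inl s); exact neg_eq_zero.1 (hzero (.inr s))]

theorem vectorSpan_le_faceDirection {ι : Type*} [Fintype ι] {f : ι → Pt S}
    (hf : ∀ i, f i ∈ PP μ) {w : ι → ℝ} (hw : ∀ i, 0 < w i) (hw1 : ∑ i, w i = 1) :
    vectorSpan ℝ (range f) ≤ faceDirection μ (∑ i, w i • f i) := by
  have h1 : ∀ s, (∑ i, w i • f i).1 s = ∑ i, w i * (f i).1 s := fun s => by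
    simp [Prod.fst_sum, Finset.sum_apply]
  have h2 : ∀ t, (∑ i, w i • f i).2 t = ∑ i, w i * (f i).2 t := fun t => by
    simp [Prod.snd_sum, Finset.sum_apply]
  rw [vectorSpan_def, Submodule.span_le]
  rintro _ ⟨_, ⟨i, rfl⟩, _, ⟨j, rfl⟩, rfl⟩
  refine ⟨fun s t h => ?_, fun s h => ?_, fun t h => ?_⟩
  · have := eq_of_sum_mul_eq hw hw1 (fun k => (hf k).1 s t) (x := fun k => (f k).1 s + (f k).2 t)
      (by simp only [mul_add, sum_add_distrib, ← h1, ← h2, h])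
    simp only [vsub_eq_sub, Prod.fst_sub, Prod.snd_sub, Pi.sub_apply]
    linarith [this i, this j]
  · have := eq_of_sum_mul_eq hw hw1 (fun k => fst_nonneg_of_mem_PP (hf k) s) (by rw [← h1, h])
    simp [this i, this j]
  · have := eq_of_sum_mul_eq hw hw1 (fun k => snd_nonneg_of_mem_PP (hf k) t) (by rw [← h2, h])
    simp [this i, this j]

variable [Fintype S] [Nonempty S]

theorem IsFreeComponent.exists_tight (hp : p ∈ TT μ) {c : (tightGraph μ p).ConnectedComponent}
    (hc : IsFreeComponent c) :
    ∃ e : S × S, p.1 e.1 + p.2 e.2 = μ e.1 e.2 ∧ 0 < μ e.1 e.2 ∧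
      (tightGraph μ p).connectedComponentMk (.inl e.1) = c ∧
      (tightGraph μ p).connectedComponentMk (.inr e.2) = c := by
  have h1 := fst_nonneg_of_mem_PP hp.1
  have h2 := snd_nonneg_of_mem_PP hp.1
  obtain ⟨v, rfl⟩ := c.exists_rep
  have hv := hc v rfl
  rcases v with s | t
  · have hs : 0 < p.1 s := lt_of_le_of_ne (h1 s) (Ne.symm hv)
    obtain ⟨t, ht⟩ := exists_tight_of_fst_pos hp hs
    refine ⟨(s, t), ht, ?_, rfl,
      (ConnectedComponent.sound (tightGraph_adj_inl_inr.2 ht).reachable).symm⟩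
    linarith [h2 t]
  · have ht : 0 < p.2 t := lt_of_le_of_ne (h2 t) (Ne.symm hv)
    obtain ⟨s, hs⟩ := exists_tight_of_snd_pos hp ht
    refine ⟨(s, t), hs, ?_, ConnectedComponent.sound (tightGraph_adj_inl_inr.2 hs).reachable, rfl⟩
    linarith [h1 s]

variable [DecidableEq S]

/-- One tight edge from each of `n` free components of the tight graph. -/
theorem exists_isUniqueMaxMatching_of_le_card (hp : p ∈ TT μ) (hμ : ∀ s t, 0 ≤ μ s t) {n : ℕ}
    (hn : n ≤ Nat.card {c : (tightGraph μ p).ConnectedComponent // IsFreeComponent c}) :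
    ∃ (A B : Finset S) (σ : S → S), A.card = n ∧ B.card = n ∧ BijOn σ A B ∧
      IsUniqueMaxMatching μ A B σ := by
  classical
  set G := tightGraph μ p
  choose e htight hpos hfst hsnd using
    fun c : {c : G.ConnectedComponent // IsFreeComponent c} => c.2.exists_tight hp
  have he1 : Function.Injective fun c => (e c).1 := fun c c' h => Subtype.ext
    ((hfst c).symm.trans ((congrArg (G.connectedComponentMk ∘ .inl) h).trans (hfst c')))
  have he2 : Function.Injective fun c => (e c).2 := fun c c' h => Subtype.ext
    ((hsnd c).symm.trans ((congrArg (G.connectedComponentMk ∘ .inr) h).trans (hsnd c')))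
  have := Fintype.ofFinite {c : G.ConnectedComponent // IsFreeComponent c}
  obtain ⟨T, -, hT⟩ := Finset.exists_subset_card_eq
    (s := (univ : Finset {c : G.ConnectedComponent // IsFreeComponent c})) (n := n)
    (by rwa [card_univ, ← Nat.card_eq_fintype_card])
  set σ := Function.extend (fun c => (e c).1) (fun c => (e c).2) id
  have hσ : ∀ c, σ (e c).1 = (e c).2 := he1.extend_apply _ _
  have hbij : BijOn σ (T.image fun c => (e c).1) (T.image fun c => (e c).2) := by
    rw [coe_image, coe_image]
    exact bijOn_extend_image he1 he2 _
  refine ⟨_, _, σ, by rw [Finset.card_image_of_injective _ he1, hT],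
    by rw [Finset.card_image_of_injective _ he2, hT], hbij,
    isUniqueMaxMatching_of_tight hp.1 hμ hbij ?_ ?_ ?_⟩
  · simp only [Finset.mem_image]
    rintro _ ⟨c, -, rfl⟩
    rw [hσ]
    exact htight c
  · simp only [Finset.mem_image]
    rintro _ ⟨c, -, rfl⟩ _ ⟨c', -, rfl⟩ h
    have hcc : c = c' := Subtype.ext ((hfst c).symm.trans
      ((ConnectedComponent.sound (tightGraph_adj_inl_inr.2 h).reachable).trans (hsnd c')))
    rw [hσ, hcc]
  · simp only [Finset.mem_image]
    rintro _ ⟨c, -, rfl⟩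
    rw [hσ]
    exact hpos c

theorem exists_isUniqueMaxMatching_of_simplex (hμ : ∀ s t, 0 ≤ μ s t) {n : ℕ}
    {f : Fin (n + 1) → Pt S} (hf : AffineIndependent ℝ f) (hfT : convexHull ℝ (range f) ⊆ TT μ) :
    ∃ (A B : Finset S) (σ : S → S), A.card = n ∧ B.card = n ∧ BijOn σ A B ∧
      IsUniqueMaxMatching μ A B σ := by
  set w : Fin (n + 1) → ℝ := fun _ => (n + 1 : ℝ)⁻¹
  have hw : ∀ i, 0 < w i := fun _ => by positivity
  have hw1 : ∑ i, w i = 1 := by simp [w]; field_simp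
  have hpT : ∑ i, w i • f i ∈ TT μ := hfT ((convex_convexHull ℝ _).sum_mem (fun i _ => (hw i).le)
    hw1 fun i _ => subset_convexHull ℝ _ (mem_range_self i))
  refine exists_isUniqueMaxMatching_of_le_card hpT hμ ?_
  calc n = finrank ℝ (vectorSpan ℝ (range f)) := (hf.finrank_vectorSpan (Fintype.card_fin _)).symm
    _ ≤ finrank ℝ (faceDirection μ (∑ i, w i • f i)) := Submodule.finrank_mono
      (vectorSpan_le_faceDirection (fun i => (hfT (subset_convexHull ℝ _ (mem_range_self i))).1)
        hw hw1)
    _ ≤ _ := finrank_faceDirection_le _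

end Forward

theorem stmt16_general {S : Type*} [Fintype S] [Nonempty S] [DecidableEq S]
    (μ : S → S → ℝ) (hμ : DirDist μ) (n : ℕ) :
    (∃ f : Fin (n + 1) → Pt S, AffineIndependent ℝ f ∧
      convexHull ℝ (Set.range f) ⊆ TT μ) ↔
    (∃ (A B : Finset S) (σ : S → S), A.card = n ∧ B.card = n ∧
      Set.BijOn σ ↑A ↑B ∧
      ∀ M : Finset (S × S), ↑M ⊆ (↑A ×ˢ ↑B : Set (S × S)) →
        (∀ p ∈ M, ∀ q ∈ M, p ≠ q → p.1 ≠ q.1 ∧ p.2 ≠ q.2) →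
        M ≠ A.image (fun a => (a, σ a)) →
        ∑ p ∈ M, μ p.1 p.2 < ∑ a ∈ A, μ a (σ a)) := by
  constructor
  · rintro ⟨f, hf, hfT⟩
    exact exists_isUniqueMaxMatching_of_simplex hμ.1 hf hfT
  · rintro ⟨A, B, σ, rfl, -, hbij, huniq⟩
    exact IsUniqueMaxMatching.exists_simplex huniq hbij hμ.1

/-- Theorem 2.14 (dimension criterion for the tight span).  `dim T_μ ≥ n` iff
there are `n`-element subsets `A, B ⊆ S` such that the maximum-weight matching
problem on the complete bipartite graph `(A, B)` with weights `μ(a,b)` has a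
unique optimal solution, which is a perfect matching. -/
theorem stmt16 {S : Type*} [Fintype S] [Nonempty S] [DecidableEq S]
    (μ : S → S → ℝ) (hμ : DirDist μ) (n : ℕ) (hn : 0 < n) :
    (∃ f : Fin (n + 1) → Pt S, AffineIndependent ℝ f ∧
      convexHull ℝ (Set.range f) ⊆ TT μ) ↔
    (∃ (A B : Finset S) (σ : S → S), A.card = n ∧ B.card = n ∧
      Set.BijOn σ ↑A ↑B ∧
      ∀ M : Finset (S × S), ↑M ⊆ (↑A ×ˢ ↑B : Set (S × S)) →
        (∀ p ∈ M, ∀ q ∈ M, p ≠ q → p.1 ≠ q.1 ∧ p.2 ≠ q.2) →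
        M ≠ A.image (fun a => (a, σ a)) →
        ∑ p ∈ M, μ p.1 p.2 < ∑ a ∈ A, μ a (σ a)) :=
  stmt16_general μ hμ n
end

section
/- Let μ be a directed distance on a nonempty finite set S. The following are equivalent: (b) there do not exist 3 affinely independent points of ℝ^{S^{cr}} whose convex hull is contained in T_μ (i.e., dim T_μ ≤ 1); (c) for all s,t,u,v ∈ S (not necessarily distinct), μ(s,u) + μ(t,v) ≤ max{ μ(s,v) + μ(t,u), μ(s,u), μ(s,v), μ(t,u), μ(t,v) }. -/
open scoped BigOperators

set_option linter.unusedSectionVars false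
set_option maxHeartbeats 1000000

namespace Stmt17Aux

variable {S : Type*} [Fintype S] [Nonempty S]

lemma mem_PP {μ : S → S → ℝ} {p : Pt S} :
    p ∈ PP μ ↔ (∀ x y, μ x y ≤ p.1 x + p.2 y) ∧ (∀ x, 0 ≤ p.1 x) ∧ (∀ y, 0 ≤ p.2 y) := by
  constructor
  · rintro ⟨h1, h2⟩
    rw [Prod.le_def] at h2
    exact ⟨h1, fun x => h2.1 x, fun y => h2.2 y⟩
  · rintro ⟨h1, h2, h3⟩
    exact ⟨h1, Prod.le_def.mpr ⟨fun x => h2 x, fun y => h3 y⟩⟩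

lemma hull_subset_TT {μ : S → S → ℝ} (f : Fin 3 → Pt S)
    (hPPf : ∀ i, f i ∈ PP μ)
    (hrow : ∀ x, (∀ i, (f i).1 x = 0) ∨ ∃ y, ∀ i, (f i).1 x + (f i).2 y = μ x y)
    (hcol : ∀ y, (∀ i, (f i).2 y = 0) ∨ ∃ x, ∀ i, (f i).1 x + (f i).2 y = μ x y) :
    convexHull ℝ (Set.range f) ⊆ TT μ := by
  set T' : Set (Pt S) :=
    {q | q ∈ PP μ ∧ (∀ x, (∀ i, (f i).1 x = 0) → q.1 x = 0)
      ∧ (∀ y, (∀ i, (f i).2 y = 0) → q.2 y = 0)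
      ∧ (∀ x y, (∀ i, (f i).1 x + (f i).2 y = μ x y) → q.1 x + q.2 y = μ x y)} with hT'
  have hconv : Convex ℝ T' := by
    rintro q1 ⟨hq1P, hq1r, hq1c, hq1t⟩ q2 ⟨hq2P, hq2r, hq2c, hq2t⟩ a b ha hb hab
    have m1 := mem_PP.mp hq1P; have m2 := mem_PP.mp hq2P
    have hco1 : ∀ x, (a • q1 + b • q2).1 x = a * q1.1 x + b * q2.1 x := fun x => by
      simp [Prod.fst_add, Prod.smul_fst, Pi.add_apply, Pi.smul_apply, smul_eq_mul]
    have hco2 : ∀ y, (a • q1 + b • q2).2 y = a * q1.2 y + b * q2.2 y := fun y => by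
      simp [Prod.snd_add, Prod.smul_snd, Pi.add_apply, Pi.smul_apply, smul_eq_mul]
    refine ⟨mem_PP.mpr ⟨?_, ?_, ?_⟩, ?_, ?_, ?_⟩
    · intro x y
      rw [hco1, hco2]
      have h1 := mul_le_mul_of_nonneg_left (m1.1 x y) ha
      have h2 := mul_le_mul_of_nonneg_left (m2.1 x y) hb
      rw [mul_add] at h1 h2
      have h3 : a * μ x y + b * μ x y = μ x y := by rw [← add_mul, hab, one_mul]
      linarith
    · intro x
      rw [hco1]
      have := mul_nonneg ha (m1.2.1 x); have := mul_nonneg hb (m2.2.1 x); linarith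
    · intro y
      rw [hco2]
      have := mul_nonneg ha (m1.2.2 y); have := mul_nonneg hb (m2.2.2 y); linarith
    · intro x hx
      rw [hco1, hq1r x hx, hq2r x hx]; ring
    · intro y hy
      rw [hco2, hq1c y hy, hq2c y hy]; ring
    · intro x y hxy
      rw [hco1, hco2]
      linear_combination a * (hq1t x y hxy) + b * (hq2t x y hxy) + μ x y * hab
  have hsub : T' ⊆ TT μ := by
    rintro q ⟨hqP, hqr, hqc, hqt⟩
    refine ⟨hqP, ?_⟩
    rintro q' hq'P hle
    rw [Prod.le_def] at hle
    have hq'm := mem_PP.mp hq'P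
    have hc1 : ∀ x, q'.1 x = q.1 x := by
      intro x
      rcases hrow x with h0 | ⟨y, hy⟩
      · have e := hqr x h0
        have := hq'm.2.1 x
        have := hle.1 x
        linarith
      · have h1 := hqt x y hy
        have h2 := hq'm.1 x y
        have h3 := hle.2 y
        have h4 := hle.1 x
        linarith
    have hc2 : ∀ y, q'.2 y = q.2 y := by
      intro y
      rcases hcol y with h0 | ⟨x, hx⟩
      · have e := hqc y h0
        have := hq'm.2.2 y
        have := hle.2 y
        linarith
      · have h1 := hqt x y hx
        have h2 := hq'm.1 x y
        have h3 := hle.2 y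
        have h4 := hle.1 x
        linarith
    exact Prod.ext (funext hc1) (funext hc2)
  have hrange : Set.range f ⊆ T' := by
    rintro _ ⟨i, rfl⟩
    exact ⟨hPPf i, fun x h => h i, fun y h => h i, fun x y h => h i⟩
  exact (convexHull_min hrange hconv).trans hsub

lemma TT_row_cover {μ : S → S → ℝ} {p : Pt S} (hp : p ∈ TT μ) (x : S) :
    p.1 x = 0 ∨ ∃ y, p.1 x + p.2 y = μ x y := by
  classical
  by_contra hcon
  push_neg at hcon
  obtain ⟨hx0, hxt⟩ := hcon
  obtain ⟨hpP, hmin⟩ := hp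
  have hm := mem_PP.mp hpP
  have hx : 0 < p.1 x := lt_of_le_of_ne (hm.2.1 x) (Ne.symm hx0)
  have hslack : ∀ y, μ x y < p.1 x + p.2 y :=
    fun y => lt_of_le_of_ne (hm.1 x y) (fun h => hxt y h.symm)
  set η := min (p.1 x) (Finset.univ.inf' Finset.univ_nonempty (fun y => p.1 x + p.2 y - μ x y)) with hηdef
  have hηpos : 0 < η := by
    apply lt_min hx
    rw [Finset.lt_inf'_iff]
    intro y _
    linarith [hslack y]
  have hη1 : η ≤ p.1 x := min_le_left _ _
  have hη2 : ∀ y, η ≤ p.1 x + p.2 y - μ x y := by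
    intro y
    exact le_trans (min_le_right _ _) (Finset.inf'_le _ (Finset.mem_univ y))
  set q : Pt S := (Function.update p.1 x (p.1 x - η), p.2) with hqdef
  have hqP : q ∈ PP μ := by
    rw [mem_PP]
    refine ⟨?_, ?_, hm.2.2⟩
    · intro x' y
      by_cases hxx : x' = x
      · subst hxx
        show μ x' y ≤ Function.update p.1 x' (p.1 x' - η) x' + p.2 y
        rw [Function.update_self]
        linarith [hη2 y]
      · show μ x' y ≤ Function.update p.1 x (p.1 x - η) x' + p.2 y
        rw [Function.update_of_ne hxx]
        exact hm.1 x' y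
    · intro x'
      by_cases hxx : x' = x
      · subst hxx
        show 0 ≤ Function.update p.1 x' (p.1 x' - η) x'
        rw [Function.update_self]; linarith
      · show 0 ≤ Function.update p.1 x (p.1 x - η) x'
        rw [Function.update_of_ne hxx]
        exact hm.2.1 x'
  have hqle : q ≤ p := by
    rw [Prod.le_def]
    constructor
    · intro x'
      by_cases hxx : x' = x
      · subst hxx
        show Function.update p.1 x' (p.1 x' - η) x' ≤ p.1 x'
        rw [Function.update_self]; linarith
      · show Function.update p.1 x (p.1 x - η) x' ≤ p.1 x'
        rw [Function.update_of_ne hxx]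
    · exact le_refl _
  have heq := hmin q hqP hqle
  have : q.1 x = p.1 x := by rw [heq]
  rw [hqdef] at this
  simp only [Function.update_self] at this
  linarith

lemma TT_col_cover {μ : S → S → ℝ} {p : Pt S} (hp : p ∈ TT μ) (y : S) :
    p.2 y = 0 ∨ ∃ x, p.1 x + p.2 y = μ x y := by
  classical
  by_contra hcon
  push_neg at hcon
  obtain ⟨hy0, hyt⟩ := hcon
  obtain ⟨hpP, hmin⟩ := hp
  have hm := mem_PP.mp hpP
  have hy : 0 < p.2 y := lt_of_le_of_ne (hm.2.2 y) (Ne.symm hy0)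
  have hslack : ∀ x, μ x y < p.1 x + p.2 y :=
    fun x => lt_of_le_of_ne (hm.1 x y) (fun h => hyt x h.symm)
  set η := min (p.2 y) (Finset.univ.inf' Finset.univ_nonempty (fun x => p.1 x + p.2 y - μ x y)) with hηdef
  have hηpos : 0 < η := by
    apply lt_min hy
    rw [Finset.lt_inf'_iff]
    intro x _
    linarith [hslack x]
  have hη1 : η ≤ p.2 y := min_le_left _ _
  have hη2 : ∀ x, η ≤ p.1 x + p.2 y - μ x y := by
    intro x
    exact le_trans (min_le_right _ _) (Finset.inf'_le _ (Finset.mem_univ x))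
  set q : Pt S := (p.1, Function.update p.2 y (p.2 y - η)) with hqdef
  have hqP : q ∈ PP μ := by
    rw [mem_PP]
    refine ⟨?_, hm.2.1, ?_⟩
    · intro x y'
      by_cases hyy : y' = y
      · subst hyy
        show μ x y' ≤ p.1 x + Function.update p.2 y' (p.2 y' - η) y'
        rw [Function.update_self]
        linarith [hη2 x]
      · show μ x y' ≤ p.1 x + Function.update p.2 y (p.2 y - η) y'
        rw [Function.update_of_ne hyy]
        exact hm.1 x y'
    · intro y'
      by_cases hyy : y' = y
      · subst hyy
        show 0 ≤ Function.update p.2 y' (p.2 y' - η) y'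
        rw [Function.update_self]; linarith
      · show 0 ≤ Function.update p.2 y (p.2 y - η) y'
        rw [Function.update_of_ne hyy]
        exact hm.2.2 y'
  have hqle : q ≤ p := by
    rw [Prod.le_def]
    constructor
    · exact le_refl _
    · intro y'
      by_cases hyy : y' = y
      · subst hyy
        show Function.update p.2 y' (p.2 y' - η) y' ≤ p.2 y'
        rw [Function.update_self]; linarith
      · show Function.update p.2 y (p.2 y - η) y' ≤ p.2 y'
        rw [Function.update_of_ne hyy]
  have heq := hmin q hqP hqle
  have : q.2 y = p.2 y := by rw [heq]
  rw [hqdef] at this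
  simp only [Function.update_self] at this
  linarith


lemma violation_of_triangle {μ : S → S → ℝ} (f : Fin 3 → Pt S)
    (hind : AffineIndependent ℝ f) (hsub : convexHull ℝ (Set.range f) ⊆ TT μ) :
    ∃ s t u v : S,
      max (μ s v + μ t u) (max (μ s u) (max (μ s v) (max (μ t u) (μ t v)))) < μ s u + μ t v := by
  set d1 : Pt S := f 1 - f 0 with hd1
  set d2 : Pt S := f 2 - f 0 with hd2
  have hlin : ∀ a b : ℝ, a • d1 + b • d2 = 0 → a = 0 ∧ b = 0 := by
    intro a b hab
    have h := affineIndependent_iff.mp hind Finset.univ ![-(a + b), a, b] ?_ ?_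
    · constructor
      · simpa using h 1 (Finset.mem_univ 1)
      · simpa using h 2 (Finset.mem_univ 2)
    · simp [Fin.sum_univ_three]
    · rw [Fin.sum_univ_three]
      simp only [Matrix.cons_val_zero, Matrix.cons_val_one, Matrix.head_cons,
        Matrix.cons_val_two, Matrix.tail_cons]
      rw [hd1, hd2] at hab
      linear_combination (norm := module) hab
  set p : Pt S := (3⁻¹ : ℝ) • f 0 + (3⁻¹ : ℝ) • f 1 + (3⁻¹ : ℝ) • f 2 with hp
  have hmem : ∀ a b : ℝ, |a| ≤ 6⁻¹ → |b| ≤ 6⁻¹ → p + a • d1 + b • d2 ∈ TT μ := by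
    intro a b ha hb
    apply hsub
    have ha' := abs_le.mp ha
    have hb' := abs_le.mp hb
    have hsum : ∑ i, (![3⁻¹ - a - b, 3⁻¹ + a, 3⁻¹ + b] : Fin 3 → ℝ) i = 1 := by
      simp [Fin.sum_univ_three]; ring
    have hw0 : ∀ i ∈ (Finset.univ : Finset (Fin 3)),
        (0:ℝ) ≤ ![3⁻¹ - a - b, 3⁻¹ + a, 3⁻¹ + b] i := by
      intro i _
      fin_cases i <;> simp <;> [linarith; linarith; linarith]
    have hcm := Finset.centerMass_mem_convexHull (Finset.univ : Finset (Fin 3))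
      hw0 (by rw [hsum]; norm_num) (fun i _ => Set.mem_range_self (f := f) i)
    have hcme : Finset.univ.centerMass ![3⁻¹ - a - b, 3⁻¹ + a, 3⁻¹ + b] f
        = p + a • d1 + b • d2 := by
      rw [Finset.centerMass, hsum, inv_one, one_smul, Fin.sum_univ_three]
      simp only [Matrix.cons_val_zero, Matrix.cons_val_one, Matrix.head_cons,
        Matrix.cons_val_two, Matrix.tail_cons]
      rw [hp, hd1, hd2]
      module
    rwa [hcme] at hcm
  have hPP' : ∀ a b : ℝ, |a| ≤ 6⁻¹ → |b| ≤ 6⁻¹ → p + a • d1 + b • d2 ∈ PP μ :=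
    fun a b ha hb => (hmem a b ha hb).1
  have coord1 : ∀ (a b : ℝ) (x : S),
      (p + a • d1 + b • d2).1 x = p.1 x + a * d1.1 x + b * d2.1 x := by
    intro a b x
    simp [Prod.fst_add, Prod.smul_fst, Pi.add_apply, Pi.smul_apply, smul_eq_mul]
  have coord2 : ∀ (a b : ℝ) (y : S),
      (p + a • d1 + b • d2).2 y = p.2 y + a * d1.2 y + b * d2.2 y := by
    intro a b y
    simp [Prod.snd_add, Prod.smul_snd, Pi.add_apply, Pi.smul_apply, smul_eq_mul]
  have h6 : |(6⁻¹ : ℝ)| ≤ 6⁻¹ := by rw [abs_of_pos (by norm_num : (0:ℝ) < 6⁻¹)]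
  have h6' : |(-6⁻¹ : ℝ)| ≤ 6⁻¹ := by rw [abs_neg]; exact h6
  have h0 : |(0 : ℝ)| ≤ 6⁻¹ := by rw [abs_zero]; norm_num
  have key1 : ∀ x y, p.1 x + p.2 y = μ x y → d1.1 x + d1.2 y = 0 ∧ d2.1 x + d2.2 y = 0 := by
    intro x y hxy
    have hpp := (mem_PP.mp (hPP' 6⁻¹ 0 h6 h0)).1 x y
    have hpm := (mem_PP.mp (hPP' (-6⁻¹) 0 h6' h0)).1 x y
    have hqp := (mem_PP.mp (hPP' 0 6⁻¹ h0 h6)).1 x y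
    have hqm := (mem_PP.mp (hPP' 0 (-6⁻¹) h0 h6')).1 x y
    rw [coord1, coord2] at hpp hpm hqp hqm
    constructor <;> linarith
  have key2row : ∀ x, p.1 x = 0 → d1.1 x = 0 ∧ d2.1 x = 0 := by
    intro x hx
    have hpp := (mem_PP.mp (hPP' 6⁻¹ 0 h6 h0)).2.1 x
    have hpm := (mem_PP.mp (hPP' (-6⁻¹) 0 h6' h0)).2.1 x
    have hqp := (mem_PP.mp (hPP' 0 6⁻¹ h0 h6)).2.1 x
    have hqm := (mem_PP.mp (hPP' 0 (-6⁻¹) h0 h6')).2.1 x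
    rw [coord1] at hpp hpm hqp hqm
    constructor <;> linarith
  have key2col : ∀ y, p.2 y = 0 → d1.2 y = 0 ∧ d2.2 y = 0 := by
    intro y hy
    have hpp := (mem_PP.mp (hPP' 6⁻¹ 0 h6 h0)).2.2 y
    have hpm := (mem_PP.mp (hPP' (-6⁻¹) 0 h6' h0)).2.2 y
    have hqp := (mem_PP.mp (hPP' 0 6⁻¹ h0 h6)).2.2 y
    have hqm := (mem_PP.mp (hPP' 0 (-6⁻¹) h0 h6')).2.2 y
    rw [coord2] at hpp hpm hqp hqm
    constructor <;> linarith
  have hpTT : p ∈ TT μ := by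
    have := hmem 0 0 h0 h0
    simpa using this
  have hpm := mem_PP.mp hpTT.1
  have hdet : ∃ s t : S, d1.1 s * d2.1 t - d2.1 s * d1.1 t ≠ 0 := by
    by_contra hd
    push_neg at hd
    have hcol0 : ∀ a b : ℝ, (∀ x, a * d1.1 x + b * d2.1 x = 0) →
        ∀ y, a * d1.2 y + b * d2.2 y = 0 := by
      intro a b hrow0 y
      rcases TT_col_cover hpTT y with h0' | ⟨x, hx⟩
      · obtain ⟨e1, e2⟩ := key2col y h0'
        rw [e1, e2]; ring
      · obtain ⟨e1, e2⟩ := key1 x y hx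
        have hr := hrow0 x
        have f1 : d1.2 y = -d1.1 x := by linarith
        have f2 : d2.2 y = -d2.1 x := by linarith
        rw [f1, f2]
        linear_combination -hr
    by_cases hall : ∀ x, d1.1 x = 0 ∧ d2.1 x = 0
    · have hz : ∀ y, d1.2 y = 0 := by
        intro y
        have := hcol0 1 0 (fun x => by rw [(hall x).1]; ring) y
        linarith
      have hd10 : d1 = 0 := by
        apply Prod.ext
        · funext z; exact (hall z).1
        · funext z; exact hz z
      have := hlin 1 0 (by rw [hd10]; simp)
      exact one_ne_zero this.1
    · push_neg at hall
      obtain ⟨x0, hx0⟩ := hall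
      have hrow0 : ∀ x, (-d2.1 x0) * d1.1 x + (d1.1 x0) * d2.1 x = 0 := by
        intro x
        have := hd x0 x
        linear_combination this
      have hcol := hcol0 _ _ hrow0
      have hzero : (-d2.1 x0) • d1 + (d1.1 x0) • d2 = 0 := by
        apply Prod.ext
        · funext z
          have := hrow0 z
          simpa [Prod.fst_add, Prod.smul_fst, Pi.add_apply, Pi.smul_apply, smul_eq_mul] using this
        · funext z
          have := hcol z
          simpa [Prod.snd_add, Prod.smul_snd, Pi.add_apply, Pi.smul_apply, smul_eq_mul] using this
      obtain ⟨ha, hb⟩ := hlin _ _ hzero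
      exact (hx0 hb) (neg_eq_zero.mp ha)
  obtain ⟨s, t, hst⟩ := hdet
  have hs_ne : ¬(d1.1 s = 0 ∧ d2.1 s = 0) := by
    rintro ⟨h1, h2⟩; apply hst; rw [h1, h2]; ring
  have ht_ne : ¬(d1.1 t = 0 ∧ d2.1 t = 0) := by
    rintro ⟨h1, h2⟩; apply hst; rw [h1, h2]; ring
  have hp1s : 0 < p.1 s := by
    rcases eq_or_lt_of_le (hpm.2.1 s) with h | h
    · exact absurd (key2row s h.symm) hs_ne
    · exact h
  have hp1t : 0 < p.1 t := by
    rcases eq_or_lt_of_le (hpm.2.1 t) with h | h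
    · exact absurd (key2row t h.symm) ht_ne
    · exact h
  obtain ⟨u, hu⟩ : ∃ u, p.1 s + p.2 u = μ s u := by
    rcases TT_row_cover hpTT s with h | h
    · exact absurd h (by linarith)
    · exact h
  obtain ⟨v, hv⟩ : ∃ v, p.1 t + p.2 v = μ t v := by
    rcases TT_row_cover hpTT t with h | h
    · exact absurd h (by linarith)
    · exact h
  have hp2u : 0 < p.2 u := by
    rcases eq_or_lt_of_le (hpm.2.2 u) with h | h
    · obtain ⟨e1, e2⟩ := key2col u h.symm
      obtain ⟨k1, k2⟩ := key1 s u hu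
      exact absurd ⟨by linarith, by linarith⟩ hs_ne
    · exact h
  have hp2v : 0 < p.2 v := by
    rcases eq_or_lt_of_le (hpm.2.2 v) with h | h
    · obtain ⟨e1, e2⟩ := key2col v h.symm
      obtain ⟨k1, k2⟩ := key1 t v hv
      exact absurd ⟨by linarith, by linarith⟩ ht_ne
    · exact h
  have hsv : μ s v < p.1 s + p.2 v := by
    rcases lt_or_eq_of_le (hpm.1 s v) with h | h
    · exact h
    · exfalso
      obtain ⟨k1, k2⟩ := key1 s v h.symm
      obtain ⟨l1, l2⟩ := key1 t v hv
      apply hst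
      have e1 : d1.1 s = d1.1 t := by linarith
      have e2 : d2.1 s = d2.1 t := by linarith
      rw [e1, e2]; ring
  have htu : μ t u < p.1 t + p.2 u := by
    rcases lt_or_eq_of_le (hpm.1 t u) with h | h
    · exact h
    · exfalso
      obtain ⟨k1, k2⟩ := key1 t u h.symm
      obtain ⟨l1, l2⟩ := key1 s u hu
      apply hst
      have e1 : d1.1 s = d1.1 t := by linarith
      have e2 : d2.1 s = d2.1 t := by linarith
      rw [e1, e2]; ring
  refine ⟨s, t, u, v, ?_⟩
  simp only [max_lt_iff]
  refine ⟨by linarith, by linarith, by linarith, by linarith, by linarith⟩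


open Classical in
noncomputable def Cc (μ : S → S → ℝ) (s t u v : S) (α β : ℝ) (x : S) : ℝ :=
  if x = s then μ s u - α else if x = t then μ t v - β else
    max 0 (max (μ x u - α) (μ x v - β))

open Classical in
noncomputable def Rc (μ : S → S → ℝ) (s t u v : S) (α β : ℝ) (y : S) : ℝ :=
  if y = u then α else if y = v then β else
    max 0 (Finset.univ.sup' Finset.univ_nonempty fun x => μ x y - Cc μ s t u v α β x)

variable {μ : S → S → ℝ} {s t u v : S} {α β : ℝ}

lemma Cc_s : Cc μ s t u v α β s = μ s u - α := by
  unfold Cc; rw [if_pos rfl]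

lemma Cc_t (hst : s ≠ t) : Cc μ s t u v α β t = μ t v - β := by
  unfold Cc; rw [if_neg (Ne.symm hst), if_pos rfl]

lemma Cc_o {x : S} (hxs : x ≠ s) (hxt : x ≠ t) :
    Cc μ s t u v α β x = max 0 (max (μ x u - α) (μ x v - β)) := by
  unfold Cc; rw [if_neg hxs, if_neg hxt]

lemma Rc_u : Rc μ s t u v α β u = α := by
  unfold Rc; rw [if_pos rfl]

lemma Rc_v (huv : u ≠ v) : Rc μ s t u v α β v = β := by
  unfold Rc; rw [if_neg (Ne.symm huv), if_pos rfl]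

lemma Rc_o {y : S} (hyu : y ≠ u) (hyv : y ≠ v) :
    Rc μ s t u v α β y
      = max 0 (Finset.univ.sup' Finset.univ_nonempty fun x => μ x y - Cc μ s t u v α β x) := by
  unfold Rc; rw [if_neg hyu, if_neg hyv]

lemma Cc_mem_PP (hst : s ≠ t) (huv : u ≠ v)
    (h1 : 0 ≤ α) (h2 : α ≤ μ s u) (h3 : 0 ≤ β) (h4 : β ≤ μ t v)
    (h5 : μ s v ≤ μ s u - α + β) (h6 : μ t u ≤ μ t v - β + α) :
    (Cc μ s t u v α β, Rc μ s t u v α β) ∈ PP μ := by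
  rw [mem_PP]
  have hCnn : ∀ x, 0 ≤ Cc μ s t u v α β x := by
    intro x
    unfold Cc
    split_ifs with e1 e2
    · linarith
    · linarith
    · exact le_max_left _ _
  refine ⟨?_, hCnn, ?_⟩
  · intro x y
    show μ x y ≤ Cc μ s t u v α β x + Rc μ s t u v α β y
    by_cases hyu : y = u
    · subst hyu
      rw [Rc_u]
      by_cases hxs : x = s
      · subst hxs; rw [Cc_s]; linarith
      by_cases hxt : x = t
      · subst hxt; rw [Cc_t hst]; linarith
      · rw [Cc_o hxs hxt]
        linarith [le_trans (le_max_left (μ x y - α) (μ x v - β)) (le_max_right 0 (max (μ x y - α) (μ x v - β)))]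
    · by_cases hyv : y = v
      · subst hyv
        rw [Rc_v huv]
        by_cases hxs : x = s
        · subst hxs; rw [Cc_s]; linarith
        by_cases hxt : x = t
        · subst hxt; rw [Cc_t hst]; linarith
        · rw [Cc_o hxs hxt]
          linarith [le_trans (le_max_right (μ x u - α) (μ x y - β)) (le_max_right 0 (max (μ x u - α) (μ x y - β)))]
      · rw [Rc_o hyu hyv]
        have hle : μ x y - Cc μ s t u v α β x
            ≤ Finset.univ.sup' Finset.univ_nonempty fun x' => μ x' y - Cc μ s t u v α β x' :=
          Finset.le_sup' (fun x' => μ x' y - Cc μ s t u v α β x') (Finset.mem_univ x)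
        have := le_max_right (0:ℝ)
          (Finset.univ.sup' Finset.univ_nonempty fun x' => μ x' y - Cc μ s t u v α β x')
        linarith
  · intro y
    show 0 ≤ Rc μ s t u v α β y
    unfold Rc
    split_ifs with e1 e2
    · linarith
    · linarith
    · exact le_max_left _ _




lemma triangle_of_violation (μ : S → S → ℝ) (hμ : ∀ a b : S, 0 ≤ μ a b) (s t u v : S)
    (h : max (μ s v + μ t u) (max (μ s u) (max (μ s v) (max (μ t u) (μ t v)))) < μ s u + μ t v) :
    ∃ f : Fin 3 → Pt S, AffineIndependent ℝ f ∧ convexHull ℝ (Set.range f) ⊆ TT μ := by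
  classical
  have htri : ∀ k : Fin 3, k = 0 ∨ k = 1 ∨ k = 2 := by decide
  set M := max (μ s v + μ t u) (max (μ s u) (max (μ s v) (max (μ t u) (μ t v)))) with hMdef
  have hM1 : μ s v + μ t u ≤ M := le_max_left _ _
  have hM2 : μ s u ≤ M := le_trans (le_max_left _ _) (le_max_right _ _)
  have hM3 : μ s v ≤ M :=
    le_trans (le_trans (le_max_left _ _) (le_max_right _ _)) (le_max_right _ _)
  have hM4 : μ t u ≤ M :=
    le_trans (le_trans (le_trans (le_max_left _ _) (le_max_right _ _)) (le_max_right _ _))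
      (le_max_right _ _)
  have hM5 : μ t v ≤ M :=
    le_trans (le_trans (le_trans (le_max_right _ _) (le_max_right _ _)) (le_max_right _ _))
      (le_max_right _ _)
  have hMlt : M < μ s u + μ t v := h
  have hst : s ≠ t := by
    rintro rfl
    linarith [hM1]
  have huv : u ≠ v := by
    rintro rfl
    linarith [hM1]
  set Δ := μ s u + μ t v - M with hΔdef
  have hΔ : 0 < Δ := by linarith
  set g := (μ s v - μ t v + μ s u - μ t u) / 2 with hgdef
  set a0 := μ s u - max g 0 with ha0def
  have hminmax : min g 0 + max g 0 = g := by rw [min_add_max]; ring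
  set b0 := μ t v + min g 0 with hb0def
  have ha2 : a0 ≤ μ s u := by
    have := le_max_right g 0
    rw [ha0def]; linarith
  have hb2 : b0 ≤ μ t v := by
    have := min_le_right g 0
    rw [hb0def]; linarith
  have hkey1 : μ s v + Δ / 2 ≤ μ s u + b0 - a0 := by
    have e : μ s u + b0 - a0 = μ t v + g := by rw [ha0def, hb0def]; linarith
    rw [e]; linarith
  have hkey2 : μ t u + Δ / 2 ≤ μ t v + a0 - b0 := by
    have e : μ t v + a0 - b0 = μ s u - g := by rw [ha0def, hb0def]; linarith
    rw [e]; linarith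
  have ha1 : Δ / 2 ≤ a0 := by
    rcases le_total g 0 with hg | hg
    · rw [ha0def, max_eq_right hg]; linarith
    · rw [ha0def, max_eq_left hg]; linarith [hμ t u]
  have hb1 : Δ / 2 ≤ b0 := by
    rcases le_total g 0 with hg | hg
    · rw [hb0def, min_eq_left hg]; linarith [hμ s v]
    · rw [hb0def, min_eq_right hg]; linarith
  -- bad sets
  set Bα : Finset ℝ :=
    ((Finset.univ.image fun x : S => μ x u) ∪
      ((Finset.univ : Finset (S × S × S)).image fun z => μ z.1 z.2.2 - μ z.2.1 z.2.2 + μ z.2.1 u)) ∪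
      ((Finset.univ : Finset (S × S)).image fun z => μ z.1 u - μ z.1 z.2) with hBαdef
  set Bβ : Finset ℝ :=
    ((Finset.univ.image fun x : S => μ x v) ∪
      ((Finset.univ : Finset (S × S × S)).image fun z => μ z.1 z.2.2 - μ z.2.1 z.2.2 + μ z.2.1 v)) ∪
      ((Finset.univ : Finset (S × S)).image fun z => μ z.1 v - μ z.1 z.2) with hBβdef
  set Bγ : Finset ℝ :=
    (Finset.univ.image fun x : S => μ x u - μ x v) ∪
      ((Finset.univ : Finset (S × S × S)).image fun z =>
        μ z.1 u - μ z.1 z.2.2 + μ z.2.1 z.2.2 - μ z.2.1 v) with hBγdef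
  have hBα1 : ∀ x : S, μ x u ∈ Bα := fun x =>
    Finset.mem_union_left _ (Finset.mem_union_left _
      (Finset.mem_image_of_mem _ (Finset.mem_univ x)))
  have hBα2 : ∀ x x' yy : S, μ x' yy - μ x yy + μ x u ∈ Bα := fun x x' yy =>
    Finset.mem_union_left _ (Finset.mem_union_right _
      (Finset.mem_image_of_mem _ (Finset.mem_univ (x', x, yy))))
  have hBα3 : ∀ x yy : S, μ x u - μ x yy ∈ Bα := fun x yy =>
    Finset.mem_union_right _ (Finset.mem_image_of_mem _ (Finset.mem_univ (x, yy)))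
  have hBβ1 : ∀ x : S, μ x v ∈ Bβ := fun x =>
    Finset.mem_union_left _ (Finset.mem_union_left _
      (Finset.mem_image_of_mem _ (Finset.mem_univ x)))
  have hBβ2 : ∀ x x' yy : S, μ x' yy - μ x yy + μ x v ∈ Bβ := fun x x' yy =>
    Finset.mem_union_left _ (Finset.mem_union_right _
      (Finset.mem_image_of_mem _ (Finset.mem_univ (x', x, yy))))
  have hBβ3 : ∀ x yy : S, μ x v - μ x yy ∈ Bβ := fun x yy =>
    Finset.mem_union_right _ (Finset.mem_image_of_mem _ (Finset.mem_univ (x, yy)))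
  have hBγ1 : ∀ x : S, μ x u - μ x v ∈ Bγ := fun x =>
    Finset.mem_union_left _ (Finset.mem_image_of_mem _ (Finset.mem_univ x))
  have hBγ2 : ∀ x x' yy : S, μ x u - μ x yy + μ x' yy - μ x' v ∈ Bγ := fun x x' yy =>
    Finset.mem_union_right _ (Finset.mem_image_of_mem _ (Finset.mem_univ (x, x', yy)))
  -- choose α0
  obtain ⟨α0, hα0I, hα0B⟩ : ∃ α0, α0 ∈ Set.Ioc (a0 - Δ / 8) a0 ∧ α0 ∉ Bα := by
    have hinf : (Set.Ioc (a0 - Δ / 8) a0).Infinite := Set.Ioc_infinite (by linarith)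
    obtain ⟨α0, hmem⟩ := (hinf.diff Bα.finite_toSet).nonempty
    exact ⟨α0, hmem.1, by simpa using hmem.2⟩
  obtain ⟨hα0lo, hα0hi⟩ := hα0I
  -- choose β0
  obtain ⟨β0, hβ0I, hβ0B, hβ0γ⟩ :
      ∃ β0, β0 ∈ Set.Ioc (b0 - Δ / 8) b0 ∧ β0 ∉ Bβ ∧ ∀ z ∈ Bγ, α0 - β0 ≠ z := by
    have hinf : (Set.Ioc (b0 - Δ / 8) b0).Infinite := Set.Ioc_infinite (by linarith)
    obtain ⟨β0, hmem⟩ :=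
      (hinf.diff (Bβ ∪ Bγ.image fun z => α0 - z).finite_toSet).nonempty
    have h2 := hmem.2
    simp only [Finset.coe_union, Set.mem_union, Finset.mem_coe, Finset.mem_image] at h2
    push_neg at h2
    refine ⟨β0, hmem.1, h2.1, ?_⟩
    intro z hz heq
    exact h2.2 z hz (by linarith)
  obtain ⟨hβ0lo, hβ0hi⟩ := hβ0I
  -- δ
  set Gaps : Finset ℝ := insert (Δ / 8)
    (((Bα.image fun z => |α0 - z|) ∪ (Bβ.image fun z => |β0 - z|)) ∪
      (Bγ.image fun z => |α0 - β0 - z|)) with hGapsdef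
  set δ := Gaps.min' ⟨Δ / 8, Finset.mem_insert_self _ _⟩ with hδdef
  have hδΔ : δ ≤ Δ / 8 := Finset.min'_le _ _ (Finset.mem_insert_self _ _)
  have hδpos : 0 < δ := by
    rw [hδdef]
    apply (Finset.lt_min'_iff _ _).mpr
    intro z hz
    rw [hGapsdef, Finset.mem_insert] at hz
    rcases hz with rfl | hz
    · linarith
    · rw [Finset.mem_union, Finset.mem_union] at hz
      rcases hz with (hz | hz) | hz
      · obtain ⟨w, hw, rfl⟩ := Finset.mem_image.mp hz
        exact abs_pos.mpr (sub_ne_zero.mpr fun hh => hα0B (hh ▸ hw))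
      · obtain ⟨w, hw, rfl⟩ := Finset.mem_image.mp hz
        exact abs_pos.mpr (sub_ne_zero.mpr fun hh => hβ0B (hh ▸ hw))
      · obtain ⟨w, hw, rfl⟩ := Finset.mem_image.mp hz
        exact abs_pos.mpr (sub_ne_zero.mpr fun hh => hβ0γ w hw hh)
  have gapα : ∀ w ∈ Bα, δ ≤ |α0 - w| := fun w hw =>
    Finset.min'_le _ _ (Finset.mem_insert_of_mem (Finset.mem_union_left _
      (Finset.mem_union_left _ (Finset.mem_image_of_mem _ hw))))
  have gapβ : ∀ w ∈ Bβ, δ ≤ |β0 - w| := fun w hw =>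
    Finset.min'_le _ _ (Finset.mem_insert_of_mem (Finset.mem_union_left _
      (Finset.mem_union_right _ (Finset.mem_image_of_mem _ hw))))
  have gapγ : ∀ w ∈ Bγ, δ ≤ |α0 - β0 - w| := fun w hw =>
    Finset.min'_le _ _ (Finset.mem_insert_of_mem (Finset.mem_union_right _
      (Finset.mem_image_of_mem _ hw)))
  -- interval facts
  have hαpos : 0 < α0 - δ := by linarith
  have hβpos : 0 < β0 - δ := by linarith
  have hαP : α0 ≤ μ s u := le_trans hα0hi ha2
  have hβQ : β0 ≤ μ t v := le_trans hβ0hi hb2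
  set Box : ℝ → ℝ → Prop := fun α β => α0 - δ ≤ α ∧ α ≤ α0 ∧ β0 - δ ≤ β ∧ β ≤ β0
    with hBoxdef
  have hcond : ∀ α β, Box α β → 0 ≤ α ∧ α ≤ μ s u ∧ 0 ≤ β ∧ β ≤ μ t v ∧
      μ s v ≤ μ s u - α + β ∧ μ t u ≤ μ t v - β + α := by
    intro α β hb
    rw [hBoxdef] at hb
    obtain ⟨h1, h2, h3, h4⟩ := hb
    refine ⟨by linarith, by linarith, by linarith, by linarith, by linarith, by linarith⟩
  -- row modes
  have hmode : ∀ x, x ≠ s → x ≠ t →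
      (∀ α β, Box α β → Cc μ s t u v α β x = 0) ∨
      (∀ α β, Box α β → Cc μ s t u v α β x = μ x u - α) ∨
      (∀ α β, Box α β → Cc μ s t u v α β x = μ x v - β) := by
    intro x hxs hxt
    have hga : δ ≤ |μ x u - α0| := by rw [abs_sub_comm]; exact gapα _ (hBα1 x)
    have hgb : δ ≤ |μ x v - β0| := by rw [abs_sub_comm]; exact gapβ _ (hBβ1 x)
    have hgab : δ ≤ |(μ x u - α0) - (μ x v - β0)| := by
      have e : (μ x u - α0) - (μ x v - β0) = -(α0 - β0 - (μ x u - μ x v)) := by ring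
      rw [e, abs_neg]; exact gapγ _ (hBγ1 x)
    rcases lt_trichotomy (μ x u - α0) 0 with ha | ha | ha
    · rcases lt_trichotomy (μ x v - β0) 0 with hb | hb | hb
      · left
        intro α β hbx
        rw [hBoxdef] at hbx
        obtain ⟨h1, h2, h3, h4⟩ := hbx
        rw [Cc_o hxs hxt]
        have hga' : μ x u - α0 ≤ -δ := by rw [abs_of_neg ha] at hga; linarith
        have hgb' : μ x v - β0 ≤ -δ := by rw [abs_of_neg hb] at hgb; linarith
        have e1 : μ x u - α ≤ 0 := by linarith
        have e2 : μ x v - β ≤ 0 := by linarith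
        rw [max_eq_left (max_le e1 e2)]
      · exfalso; rw [hb, abs_zero] at hgb; linarith
      · right; right
        intro α β hbx
        rw [hBoxdef] at hbx
        obtain ⟨h1, h2, h3, h4⟩ := hbx
        rw [Cc_o hxs hxt]
        have hga' : μ x u - α0 ≤ -δ := by rw [abs_of_neg ha] at hga; linarith
        have hb' : δ ≤ μ x v - β0 := by rw [abs_of_pos hb] at hgb; linarith
        have e1 : μ x u - α ≤ μ x v - β := by linarith
        have e2 : 0 ≤ μ x v - β := by linarith
        rw [max_eq_right e1, max_eq_right e2]
    · exfalso; rw [ha, abs_zero] at hga; linarith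
    · have ha' : δ ≤ μ x u - α0 := by rw [abs_of_pos ha] at hga; linarith
      rcases lt_trichotomy (μ x v - β0) (μ x u - α0) with hb | hb | hb
      · right; left
        intro α β hbx
        rw [hBoxdef] at hbx
        obtain ⟨h1, h2, h3, h4⟩ := hbx
        have hab' : δ ≤ (μ x u - α0) - (μ x v - β0) := by
          rw [abs_of_pos (by linarith)] at hgab; linarith
        rw [Cc_o hxs hxt]
        have e1 : μ x v - β ≤ μ x u - α := by linarith
        have e2 : 0 ≤ μ x u - α := by linarith
        rw [max_eq_left e1, max_eq_right e2]
      · exfalso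
        have e : (μ x u - α0) - (μ x v - β0) = 0 := by rw [hb]; ring
        rw [e, abs_zero] at hgab; linarith
      · right; right
        intro α β hbx
        rw [hBoxdef] at hbx
        obtain ⟨h1, h2, h3, h4⟩ := hbx
        have hab' : δ ≤ (μ x v - β0) - (μ x u - α0) := by
          have e : (μ x u - α0) - (μ x v - β0) = -((μ x v - β0) - (μ x u - α0)) := by ring
          rw [e, abs_neg, abs_of_pos (by linarith)] at hgab; linarith
        rw [Cc_o hxs hxt]
        have e1 : μ x u - α ≤ μ x v - β := by linarith
        have e2 : 0 ≤ μ x v - β := by linarith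
        rw [max_eq_right e1, max_eq_right e2]
  -- the three points
  set pts : Fin 3 → ℝ × ℝ := ![(α0, β0), (α0 - δ, β0), (α0, β0 - δ)] with hptsdef
  set f : Fin 3 → Pt S := fun i =>
    (Cc μ s t u v (pts i).1 (pts i).2, Rc μ s t u v (pts i).1 (pts i).2) with hfdef
  have hp0a : (pts 0).1 = α0 := by rw [hptsdef]; rfl
  have hp0b : (pts 0).2 = β0 := by rw [hptsdef]; rfl
  have hp1a : (pts 1).1 = α0 - δ := by rw [hptsdef]; rfl
  have hp1b : (pts 1).2 = β0 := by rw [hptsdef]; rfl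
  have hp2a : (pts 2).1 = α0 := by rw [hptsdef]; rfl
  have hp2b : (pts 2).2 = β0 - δ := by rw [hptsdef]; rfl
  have hBoxi : ∀ i, Box (pts i).1 (pts i).2 := by
    intro i
    rw [hBoxdef]
    rcases htri i with rfl | rfl | rfl
    · rw [hp0a, hp0b]; exact ⟨by linarith, le_refl _, by linarith, le_refl _⟩
    · rw [hp1a, hp1b]; exact ⟨le_refl _, by linarith, by linarith, le_refl _⟩
    · rw [hp2a, hp2b]; exact ⟨by linarith, le_refl _, le_refl _, by linarith⟩
  have hf1 : ∀ i x, (f i).1 x = Cc μ s t u v (pts i).1 (pts i).2 x := by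
    intro i x; rw [hfdef]
  have hf2 : ∀ i y, (f i).2 y = Rc μ s t u v (pts i).1 (pts i).2 y := by
    intro i y; rw [hfdef]
  have hfeasi : ∀ i, f i ∈ PP μ := by
    intro i
    obtain ⟨c1, c2, c3, c4, c5, c6⟩ := hcond _ _ (hBoxi i)
    rw [hfdef]
    exact Cc_mem_PP hst huv c1 c2 c3 c4 c5 c6
  -- row covering
  have hrowcov : ∀ x, (∀ i, (f i).1 x = 0) ∨ ∃ yy, ∀ i, (f i).1 x + (f i).2 yy = μ x yy := by
    intro x
    by_cases hxs : x = s
    · subst hxs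
      right
      refine ⟨u, fun i => ?_⟩
      rw [hf1, hf2, Cc_s, Rc_u]; ring
    by_cases hxt : x = t
    · subst hxt
      right
      refine ⟨v, fun i => ?_⟩
      rw [hf1, hf2, Cc_t hst, Rc_v huv]; ring
    rcases hmode x hxs hxt with hm | hm | hm
    · left
      intro i
      rw [hf1]; exact hm _ _ (hBoxi i)
    · right
      refine ⟨u, fun i => ?_⟩
      rw [hf1, hf2, hm _ _ (hBoxi i), Rc_u]; ring
    · right
      refine ⟨v, fun i => ?_⟩
      rw [hf1, hf2, hm _ _ (hBoxi i), Rc_v huv]; ring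
  -- column covering
  have hcolcov : ∀ yy, (∀ i, (f i).2 yy = 0) ∨ ∃ x, ∀ i, (f i).1 x + (f i).2 yy = μ x yy := by
    intro y
    by_cases hyu : y = u
    · subst hyu
      right
      refine ⟨s, fun i => ?_⟩
      rw [hf1, hf2, Cc_s, Rc_u]; ring
    by_cases hyv : y = v
    · subst hyv
      right
      refine ⟨t, fun i => ?_⟩
      rw [hf1, hf2, Cc_t hst, Rc_v huv]; ring
    -- general column
    have hxdesc : ∀ x : S, ∃ k : Fin 3, ∀ α β, Box α β →
        Cc μ s t u v α β x
          = (if k = 1 then μ x u - α else if k = 2 then μ x v - β else 0) := by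
      intro x
      by_cases hxs : x = s
      · refine ⟨1, fun α β _ => ?_⟩
        subst hxs; rw [Cc_s, if_pos rfl]
      by_cases hxt : x = t
      · refine ⟨2, fun α β _ => ?_⟩
        subst hxt; rw [Cc_t hst, if_neg (by decide), if_pos rfl]
      rcases hmode x hxs hxt with hm | hm | hm
      · exact ⟨0, fun α β hb => by
          rw [hm α β hb, if_neg (by decide), if_neg (by decide)]⟩
      · exact ⟨1, fun α β hb => by rw [hm α β hb, if_pos rfl]⟩
      · exact ⟨2, fun α β hb => by rw [hm α β hb, if_neg (by decide), if_pos rfl]⟩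
    choose ty hty using hxdesc
    set sh : ℝ → ℝ → Fin 3 → ℝ :=
      fun α β k => if k = 1 then α - α0 else if k = 2 then β - β0 else 0 with hshdef
    set base : S → ℝ := fun x => μ x y -
      (if ty x = 1 then μ x u - α0 else if ty x = 2 then μ x v - β0 else 0) with hbasedef
    have hbase0 : ∀ x, ty x = 0 → base x = μ x y := by
      intro x hx; rw [hbasedef]; simp [hx]
    have hbase1 : ∀ x, ty x = 1 → base x = μ x y - μ x u + α0 := by
      intro x hx; rw [hbasedef]; simp [hx]; try ring
    have hbase2 : ∀ x, ty x = 2 → base x = μ x y - μ x v + β0 := by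
      intro x hx; rw [hbasedef]; simp [hx]; try ring
    have hG : ∀ x α β, Box α β →
        μ x y - Cc μ s t u v α β x = base x + sh α β (ty x) := by
      intro x α β hb
      rw [hty x α β hb]
      rcases htri (ty x) with hk | hk | hk
      · rw [hbase0 x hk]; simp [hshdef, hk]
      · rw [hbase1 x hk]; simp [hshdef, hk]; try ring
      · rw [hbase2 x hk]; simp [hshdef, hk]; try ring
    have hshle : ∀ (k : Fin 3) α β, Box α β → sh α β k ≤ 0 := by
      intro k α β hb
      rw [hBoxdef] at hb
      obtain ⟨h1, h2, h3, h4⟩ := hb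
      rcases htri k with hk | hk | hk
      · simp [hshdef, hk]
      · simp [hshdef, hk]; try linarith
      · simp [hshdef, hk]; try linarith
    have hshge : ∀ (k : Fin 3) α β, Box α β → -δ ≤ sh α β k := by
      intro k α β hb
      rw [hBoxdef] at hb
      obtain ⟨h1, h2, h3, h4⟩ := hb
      rcases htri k with hk | hk | hk
      · simp [hshdef, hk]; try linarith
      · simp [hshdef, hk]; try linarith
      · simp [hshdef, hk]; try linarith
    have hgap10 : ∀ x x', ty x = 1 → ty x' = 0 → δ ≤ |base x - base x'| := by
      intro x x' h1 h0
      have e : base x - base x' = α0 - (μ x' y - μ x y + μ x u) := by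
        rw [hbase1 x h1, hbase0 x' h0]; ring
      rw [e]; exact gapα _ (hBα2 x x' y)
    have hgap20 : ∀ x x', ty x = 2 → ty x' = 0 → δ ≤ |base x - base x'| := by
      intro x x' h1 h0
      have e : base x - base x' = β0 - (μ x' y - μ x y + μ x v) := by
        rw [hbase2 x h1, hbase0 x' h0]; ring
      rw [e]; exact gapβ _ (hBβ2 x x' y)
    have hgap12 : ∀ x x', ty x = 1 → ty x' = 2 → δ ≤ |base x - base x'| := by
      intro x x' h1 h2'
      have e : base x - base x' = α0 - β0 - (μ x u - μ x y + μ x' y - μ x' v) := by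
        rw [hbase1 x h1, hbase2 x' h2']; ring
      rw [e]; exact gapγ _ (hBγ2 x x' y)
    have hgap1z : ∀ x, ty x = 1 → δ ≤ |base x| := by
      intro x h1
      have e : base x = α0 - (μ x u - μ x y) := by rw [hbase1 x h1]; ring
      rw [e]; exact gapα _ (hBα3 x y)
    have hgap2z : ∀ x, ty x = 2 → δ ≤ |base x| := by
      intro x h1
      have e : base x = β0 - (μ x v - μ x y) := by rw [hbase2 x h1]; ring
      rw [e]; exact gapβ _ (hBβ3 x y)
    obtain ⟨x1, -, hx1⟩ := Finset.exists_mem_eq_sup' Finset.univ_nonempty base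
    have hx1max : ∀ x, base x ≤ base x1 := by
      intro x; rw [← hx1]; exact Finset.le_sup' base (Finset.mem_univ x)
    have hdom : ∀ x α β, Box α β →
        base x + sh α β (ty x) ≤ base x1 + sh α β (ty x1) := by
      intro x α β hb
      by_cases hsame : ty x = ty x1
      · rw [hsame]; linarith [hx1max x]
      · have hle := hx1max x
        have hxle := hshle (ty x) α β hb
        have hxge := hshge (ty x1) α β hb
        rcases htri (ty x1) with h1 | h1 | h1
        · have e : sh α β (ty x1) = 0 := by simp [hshdef, h1]
          rw [e]; linarith
        · have hgap : δ ≤ |base x1 - base x| := by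
            rcases htri (ty x) with h0 | h0 | h0
            · exact hgap10 x1 x h1 h0
            · exact absurd (h0.trans h1.symm) hsame
            · exact hgap12 x1 x h1 h0
          have : base x ≤ base x1 - δ := by
            rw [abs_of_nonneg (by linarith)] at hgap; linarith
          linarith
        · have hgap : δ ≤ |base x1 - base x| := by
            rcases htri (ty x) with h0 | h0 | h0
            · exact hgap20 x1 x h1 h0
            · rw [abs_sub_comm]; exact hgap12 x x1 h0 h1
            · exact absurd (h0.trans h1.symm) hsame
          have : base x ≤ base x1 - δ := by
            rw [abs_of_nonneg (by linarith)] at hgap; linarith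
          linarith
    have hsup : ∀ α β, Box α β →
        (Finset.univ.sup' Finset.univ_nonempty fun x => μ x y - Cc μ s t u v α β x)
          = base x1 + sh α β (ty x1) := by
      intro α β hb
      apply le_antisymm
      · apply Finset.sup'_le
        intro x _
        rw [hG x α β hb]
        exact hdom x α β hb
      · rw [← hG x1 α β hb]
        exact Finset.le_sup' (fun x => μ x y - Cc μ s t u v α β x) (Finset.mem_univ x1)
    have hsgn : (∀ α β, Box α β → 0 ≤ base x1 + sh α β (ty x1)) ∨
        (∀ α β, Box α β → base x1 + sh α β (ty x1) < 0) := by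
      rcases htri (ty x1) with h1 | h1 | h1
      · have e : ∀ α β, sh α β (ty x1) = 0 := by
          intro α β; simp [hshdef, h1]
        rcases le_or_gt 0 (base x1) with hs | hs
        · left; intro α β hb; rw [e]; linarith
        · right; intro α β hb; rw [e]; linarith
      · rcases le_abs.mp (hgap1z x1 h1) with hs | hs
        · left; intro α β hb; linarith [hshge (ty x1) α β hb]
        · right; intro α β hb; linarith [hshle (ty x1) α β hb]
      · rcases le_abs.mp (hgap2z x1 h1) with hs | hs
        · left; intro α β hb; linarith [hshge (ty x1) α β hb]
        · right; intro α β hb; linarith [hshle (ty x1) α β hb]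
    rcases hsgn with hs | hs
    · right
      refine ⟨x1, fun i => ?_⟩
      have hb := hBoxi i
      have hR : (f i).2 y = μ x1 y - Cc μ s t u v (pts i).1 (pts i).2 x1 := by
        rw [hf2, Rc_o hyu hyv, hsup _ _ hb, max_eq_right (hs _ _ hb), ← hG x1 _ _ hb]
      rw [hR, hf1]; ring
    · left
      intro i
      have hb := hBoxi i
      rw [hf2, Rc_o hyu hyv, hsup _ _ hb]
      exact max_eq_left (le_of_lt (hs _ _ hb))
  -- affine independence
  have hfu : ∀ i, (f i).2 u = (pts i).1 := by
    intro i; rw [hf2, Rc_u]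
  have hfv : ∀ i, (f i).2 v = (pts i).2 := by
    intro i; rw [hf2, Rc_v huv]
  have haff : AffineIndependent ℝ f := by
    rw [affineIndependent_iff]
    intro sF w hw0 hwsum i hi
    set W : Fin 3 → ℝ := fun j => if j ∈ sF then w j else 0 with hWdef
    have hWsum : W 0 + W 1 + W 2 = 0 := by
      have : ∑ j, W j = 0 := by
        rw [hWdef]
        rw [Finset.sum_ite_mem, Finset.univ_inter]
        exact hw0
      rwa [Fin.sum_univ_three] at this
    have hWvec : W 0 • f 0 + W 1 • f 1 + W 2 • f 2 = 0 := by
      have e : ∀ j, W j • f j = if j ∈ sF then w j • f j else 0 := by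
        intro j
        simp only [hWdef]
        split_ifs with hj
        · rfl
        · exact zero_smul _ _
      have : ∑ j, W j • f j = 0 := by
        calc ∑ j, W j • f j = ∑ j, if j ∈ sF then w j • f j else 0 := by
              exact Finset.sum_congr rfl fun j _ => e j
          _ = ∑ j ∈ sF, w j • f j := by rw [Finset.sum_ite_mem, Finset.univ_inter]
          _ = 0 := hwsum
      rwa [Fin.sum_univ_three] at this
    have hcoord : ∀ z : S, W 0 * (f 0).2 z + W 1 * (f 1).2 z + W 2 * (f 2).2 z = 0 := by
      intro z
      have := congrArg (fun q : Pt S => q.2 z) hWvec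
      simpa [Prod.snd_add, Prod.smul_snd, Pi.add_apply, Pi.smul_apply, smul_eq_mul,
        Prod.snd_zero, Pi.zero_apply] using this
    have hu_eq := hcoord u
    have hv_eq := hcoord v
    rw [hfu 0, hfu 1, hfu 2, hp0a, hp1a, hp2a] at hu_eq
    rw [hfv 0, hfv 1, hfv 2, hp0b, hp1b, hp2b] at hv_eq
    -- hu_eq : W 0 * α0 + W 1 * (α0 - δ) + W 2 * α0 = 0
    have hW1 : W 1 = 0 := by
      have hd : W 1 * δ = 0 := by linear_combination α0 * hWsum - hu_eq
      rcases mul_eq_zero.mp hd with hh | hh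
      · exact hh
      · exact absurd hh (ne_of_gt hδpos)
    have hW2 : W 2 = 0 := by
      have hd : W 2 * δ = 0 := by linear_combination β0 * hWsum - hv_eq
      rcases mul_eq_zero.mp hd with hh | hh
      · exact hh
      · exact absurd hh (ne_of_gt hδpos)
    have hW0 : W 0 = 0 := by linarith
    have hWall : ∀ j, W j = 0 := by
      intro j; rcases htri j with rfl | rfl | rfl
      · exact hW0
      · exact hW1
      · exact hW2
    have hWi := hWall i
    simp only [hWdef] at hWi
    rwa [if_pos hi] at hWi
  exact ⟨f, haff, hull_subset_TT f hfeasi hrowcov hcolcov⟩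


end Stmt17Aux

/-- Theorem 3.1, equivalence (b) ⇔ (c).  `dim T_μ ≤ 1` iff for all
`s,t,u,v ∈ S`:
`μ(s,u) + μ(t,v) ≤ max{μ(s,v) + μ(t,u), μ(s,u), μ(s,v), μ(t,u), μ(t,v)}`. -/
theorem stmt17 {S : Type*} [Fintype S] [Nonempty S] (μ : S → S → ℝ)
    (hμ : DirDist μ) :
    (¬ ∃ f : Fin 3 → Pt S, AffineIndependent ℝ f ∧
      convexHull ℝ (Set.range f) ⊆ TT μ) ↔
    (∀ s t u v : S, μ s u + μ t v ≤
      max (μ s v + μ t u) (max (μ s u) (max (μ s v) (max (μ t u) (μ t v))))) := by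
  constructor
  · intro hno
    by_contra hc
    push_neg at hc
    obtain ⟨s, t, u, v, hlt⟩ := hc
    exact hno (Stmt17Aux.triangle_of_violation μ hμ.1 s t u v hlt)
  · rintro hc ⟨f, hind, hsub⟩
    obtain ⟨s, t, u, v, hlt⟩ := Stmt17Aux.violation_of_triangle f hind hsub
    exact absurd (hc s t u v) (not_le.mpr hlt)
end

section
/- Let μ be a directed metric on a nonempty finite set S. Then μ is congruent to its symmetrization σ(x,y) = (μ(x,y) + μ(y,x))/2, i.e., μ(C) = σ(C) for every cycle C in S, if and only if μ(x,y) + μ(y,z) + μ(z,x) = μ(z,y) + μ(y,x) + μ(x,z) for all x,y,z ∈ S. -/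
open scoped BigOperators

/-- A directed metric `μ` is congruent to its symmetrization
`σ(x,y) = (μ(x,y) + μ(y,x))/2` iff
`μ(x,y) + μ(y,z) + μ(z,x) = μ(z,y) + μ(y,x) + μ(x,z)` for all `x,y,z`. -/
theorem stmt19 {S : Type*} [Fintype S] [Nonempty S] (μ : S → S → ℝ)
    (hμ : DirMetric μ) :
    (∀ (m : ℕ) (x : Fin (m + 1) → S),
      cycLen μ m x = cycLen (fun a b => (μ a b + μ b a) / 2) m x) ↔
    (∀ x y z : S, μ x y + μ y z + μ z x = μ z y + μ y x + μ x z) := by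
  constructor
  · intro h x y z
    have h3 := h 2 ![x, y, z]
    simp [cycLen, Fin.sum_univ_succ, Fin.sum_univ_zero] at h3
    linarith
  · intro h m x
    obtain ⟨o⟩ := ‹Nonempty S›
    set g : S → ℝ := fun s => μ s o - μ o s with hg
    have key : ∀ a b : S, μ a b - (μ a b + μ b a) / 2 = (g a - g b) / 2 := by
      intro a b
      have := h a b o
      simp only [hg]
      linarith
    have hshift : ∑ i : Fin (m + 1), g (x (i + 1)) = ∑ i : Fin (m + 1), g (x i) :=
      Fintype.sum_equiv (Equiv.addRight 1) _ _ (fun i => rfl)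
    have hsub : cycLen μ m x - cycLen (fun a b => (μ a b + μ b a) / 2) m x
        = ∑ i : Fin (m + 1), (g (x i) - g (x (i + 1))) / 2 := by
      rw [cycLen, cycLen, ← Finset.sum_sub_distrib]
      exact Finset.sum_congr rfl fun i _ => key _ _
    have hsplit : ∑ i : Fin (m + 1), (g (x i) - g (x (i + 1))) / 2
        = (∑ i : Fin (m + 1), g (x i) - ∑ i : Fin (m + 1), g (x (i + 1))) / 2 := by
      rw [← Finset.sum_sub_distrib, Finset.sum_div]
    have hz : cycLen μ m x - cycLen (fun a b => (μ a b + μ b a) / 2) m x = 0 := by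
      rw [hsub, hsplit, hshift]; ring
    linarith
end
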